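/- arXiv:1406.0769 — 7 statements merged into one kernel-verified Lean document; each statement's English description precedes it below -/
import Mathlib

section
/- For all sufficiently large integers m, setting k = ⌊m/2⌋ + ⌊√m / 2⌋, one has (m - k)/(k + 1) ≤ 1 - 1/√m. -/
theorem stmt_3 : ∃ M : ℕ, ∀ m : ℕ, M ≤ m →
    ∀ k : ℕ, k = m / 2 + ⌊Real.sqrt m / 2⌋₊ →
    ((m : ℝ) - k) / (k + 1) ≤ 1 - 1 / Real.sqrt m := by
  use 100
  intro m hm k hk
  subst hk
  set t := Real.sqrt m with ht_def
  have hmcast : (100 : ℝ) ≤ (m : ℝ) := by exact_mod_cast hm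
  have ht2 : t ^ 2 = (m : ℝ) := Real.sq_sqrt (by positivity)
  have ht10 : (10 : ℝ) ≤ t := by
    rw [ht_def, show (10:ℝ) = Real.sqrt 100 by
      rw [show (100:ℝ) = 10^2 by norm_num, Real.sqrt_sq (by norm_num)]]
    exact Real.sqrt_le_sqrt hmcast
  have ht0 : (0 : ℝ) < t := by linarith
  set a : ℝ := ((m / 2 : ℕ) : ℝ) with ha_def
  set b : ℝ := ((⌊t / 2⌋₊ : ℕ) : ℝ) with hb_def
  have ha1 : (m : ℝ) - 1 ≤ 2 * a := by
    have h : m ≤ 2 * (m / 2) + 1 := by omega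
    have := (Nat.cast_le (α := ℝ)).2 h
    push_cast at this
    linarith
  have ha2 : 2 * a ≤ (m : ℝ) := by
    have h : 2 * (m / 2) ≤ m := by omega
    have := (Nat.cast_le (α := ℝ)).2 h
    push_cast at this
    linarith
  have hb1 : t / 2 - 1 ≤ b := le_of_lt (Nat.sub_one_lt_floor _)
  have hb2 : b ≤ t / 2 := Nat.floor_le (by positivity)
  have ha0 : 0 ≤ a := by positivity
  have hb0 : 0 ≤ b := by positivity
  have hcast : ((m / 2 + ⌊t / 2⌋₊ : ℕ) : ℝ) = a + b := by push_cast; ring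
  rw [hcast]
  have hden : (0 : ℝ) < a + b + 1 := by linarith
  rw [div_le_iff₀ hden]
  have key : a + b + 1 ≤ t * (2 * a + 2 * b + 1 - m) := by nlinarith
  have h1t : 1 - 1 / t = (t - 1) / t := by field_simp
  rw [h1t, div_mul_eq_mul_div, le_div_iff₀ ht0]
  nlinarith
end

section
/- There exists a real number κ with 0 < κ < 1 such that for all integers m ≥ 2 and r ≥ 1, C(m, ⌊m/2⌋ + r·⌈√m⌉) ≤ κ^r · C(m, ⌊m/2⌋). -/
/-!
Write `k = ⌈√m⌉` and `c = ⌈m/2⌉`. Moving `k` steps to the right of any `a ≥ ⌊m/2⌋`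
multiplies `C(m, a)` by `∏_{i<k} (m-a-i)/(a+1+i) ≤ ∏_{i<k} (c-i)/(c+i)`. Split `k = h + n`
with `h = ⌊k/2⌋`: the first `h` factors are at most `1` and the last `n` at most
`(c-h)/(c+h)`, and Bernoulli's inequality gives `((c+h)/(c-h))^n ≥ 1 + 2hn/(c-h) ≥ 10/9`
because `2c ≤ k² + 1 ≤ 36hn`. Hence each such step costs a factor `9/10`, and `r` steps
cost `(9/10)^r`.
-/

namespace Nat

theorem choose_add_mul_ascFactorial (m a j : ℕ) :
    m.choose (a + j) * (a + 1).ascFactorial j = m.choose a * (m - a).descFactorial j := by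
  rw [ascFactorial_eq_factorial_mul_choose, descFactorial_eq_factorial_mul_choose,
    ← choose_symm_add, mul_left_comm, mul_left_comm _ j !,
    choose_mul (by omega : a ≤ a + j), Nat.add_sub_cancel_left]

theorem ten_mul_pow_le_nine_mul_add_pow {x y n : ℕ} (hn : n ≠ 0) (hx : x ≤ 9 * n * y) :
    10 * x ^ n ≤ 9 * (x + y) ^ n := by
  have bernoulli := pow_add_mul_le_add_pow (zero_le x) (zero_le (2 * x + y)) n
  have hpow : x ^ n = x * x ^ (n - 1) := by
    conv_lhs => rw [← Nat.sub_add_cancel (Nat.one_le_iff_ne_zero.2 hn), pow_succ']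
  calc 10 * x ^ n = 9 * x ^ n + x * x ^ (n - 1) := by rw [← hpow]; ring
    _ ≤ 9 * x ^ n + 9 * n * y * x ^ (n - 1) := by gcongr
    _ ≤ 9 * (x + y) ^ n := by push_cast at bernoulli; nlinarith

theorem ten_mul_descFactorial_le_nine_mul_ascFactorial {c k : ℕ} (hk : 2 ≤ k)
    (hck : 2 * c ≤ k ^ 2 + 1) : 10 * c.descFactorial k ≤ 9 * c.ascFactorial k := by
  rcases lt_or_ge c k with hlt | hle
  · simp [descFactorial_eq_zero_iff_lt.2 hlt]
  set h := k / 2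
  set n := k - h
  have hk_eq : k = h + n := by omega
  have hn : n ≠ 0 := by omega
  have hcenter : c - h ≤ 9 * n * (2 * h) := by
    obtain ⟨h_pos, h_le_n, n_le_h_succ⟩ : 1 ≤ h ∧ h ≤ n ∧ n ≤ h + 1 := by omega
    rw [hk_eq] at hck
    have : c ≤ h + 9 * n * (2 * h) := by nlinarith
    omega
  have hdesc : c.descFactorial k = (c - h).descFactorial n * c.descFactorial h := by
    rw [hk_eq, ← descFactorial_mul_descFactorial (Nat.le_add_right h n), Nat.add_sub_cancel_left]
  have hasc : c.ascFactorial k = c.ascFactorial h * (c + h).ascFactorial n := by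
    rw [ascFactorial_mul_ascFactorial, hk_eq]
  have hfirst : c.descFactorial h ≤ c.ascFactorial h :=
    (descFactorial_le_pow c h).trans (pow_succ_le_ascFactorial c h)
  have hlast : 10 * (c - h).descFactorial n ≤ 9 * (c + h).ascFactorial n :=
    calc 10 * (c - h).descFactorial n ≤ 10 * (c - h) ^ n := by
          gcongr; exact descFactorial_le_pow _ _
      _ ≤ 9 * (c - h + 2 * h) ^ n := ten_mul_pow_le_nine_mul_add_pow hn hcenter
      _ = 9 * (c + h) ^ n := by rw [show c - h + 2 * h = c + h by omega]
      _ ≤ 9 * (c + h).ascFactorial n := by gcongr; exact pow_succ_le_ascFactorial _ _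
  rw [hdesc, hasc]
  calc 10 * ((c - h).descFactorial n * c.descFactorial h)
      = 10 * (c - h).descFactorial n * c.descFactorial h := by ring
    _ ≤ 9 * (c + h).ascFactorial n * c.ascFactorial h := by gcongr
    _ = 9 * (c.ascFactorial h * (c + h).ascFactorial n) := by ring

theorem ten_mul_choose_add_le {m a k : ℕ} (hk : 2 ≤ k) (hmk : m ≤ k ^ 2) (ha : m / 2 ≤ a) :
    10 * m.choose (a + k) ≤ 9 * m.choose a := by
  set c := m - m / 2
  have hpos : 0 < (a + 1).ascFactorial k := ascFactorial_pos a k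
  refine Nat.le_of_mul_le_mul_right ?_ hpos
  calc 10 * m.choose (a + k) * (a + 1).ascFactorial k
      = 10 * (m.choose a * (m - a).descFactorial k) := by
        rw [mul_assoc, choose_add_mul_ascFactorial]
    _ ≤ m.choose a * (10 * c.descFactorial k) := by
        rw [mul_left_comm]; gcongr; omega
    _ ≤ m.choose a * (9 * c.ascFactorial k) :=
        Nat.mul_le_mul_left _
          (ten_mul_descFactorial_le_nine_mul_ascFactorial hk (by omega))
    _ ≤ 9 * m.choose a * (a + 1).ascFactorial k := by
        rw [mul_left_comm, mul_assoc]; gcongr; omega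

end Nat

theorem two_le_ceil_sqrt {m : ℕ} (hm : 2 ≤ m) : 2 ≤ ⌈√(m : ℝ)⌉₊ := by
  have : (1 : ℝ) < √(m : ℝ) := by
    rw [Real.lt_sqrt zero_le_one]; exact_mod_cast (by omega : 1 < m)
  exact Nat.lt_ceil.2 (by exact_mod_cast this)

theorem le_ceil_sqrt_sq (m : ℕ) : m ≤ ⌈√(m : ℝ)⌉₊ ^ 2 := by
  have : (m : ℝ) ≤ (⌈√(m : ℝ)⌉₊ : ℝ) ^ 2 :=
    (Real.sqrt_le_left (Nat.cast_nonneg _)).1 (Nat.le_ceil _)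
  exact_mod_cast this

theorem le_pow_mul_of_forall_add_le {R : Type*} [Semiring R] [PartialOrder R] [IsOrderedRing R]
    {f : ℕ → R} {κ : R} (hκ : 0 ≤ κ) {a₀ k : ℕ} (hstep : ∀ a, a₀ ≤ a → f (a + k) ≤ κ * f a)
    (r : ℕ) : f (a₀ + r * k) ≤ κ ^ r * f a₀ := by
  induction r with
  | zero => simp
  | succ r ih =>
    calc f (a₀ + (r + 1) * k) = f (a₀ + r * k + k) := by rw [add_mul, one_mul, add_assoc]
      _ ≤ κ * f (a₀ + r * k) := hstep _ (by omega)
      _ ≤ κ * (κ ^ r * f a₀) := by gcongr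
      _ = κ ^ (r + 1) * f a₀ := by rw [pow_succ', mul_assoc]

theorem stmt_4 : ∃ κ : ℝ, 0 < κ ∧ κ < 1 ∧ ∀ m r : ℕ, 2 ≤ m → 1 ≤ r →
    (Nat.choose m (m / 2 + r * ⌈Real.sqrt m⌉₊) : ℝ) ≤ κ ^ r * Nat.choose m (m / 2) := by
  refine ⟨9 / 10, by norm_num, by norm_num, fun m r hm _ => ?_⟩
  refine le_pow_mul_of_forall_add_le (f := fun a => (m.choose a : ℝ)) (by norm_num)
    (fun a ha => ?_) r
  have step : (10 : ℝ) * m.choose (a + ⌈√(m : ℝ)⌉₊) ≤ 9 * m.choose a := by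
    exact_mod_cast Nat.ten_mul_choose_add_le (two_le_ceil_sqrt hm) (le_ceil_sqrt_sq m) ha
  linarith
end

section
/- Let P be the (n×n) transition matrix of the lazy reflecting random walk on a path with n ≥ 2 vertices: p_{1,1} = p_{n,n} = 2/3, p_{i,j} = 1/3 whenever |i-j| ≤ 1 otherwise, and p_{i,j} = 0 when |i-j| > 1. Then there is an absolute constant c > 0 (independent of n) such that the (1,1) entry of I + P + P² + ... + P^t is at most c·√t for all 1 ≤ t ≤ n². -/
/-!
The walk is diagonalised by the discrete cosine transform: `cos ((2j+1) θₖ)` with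
`θₖ = kπ/(2n)` is an eigenvector with eigenvalue `λₖ = (1 + 2 cos (2θₖ))/3`, and expanding the
indicator of vertex `0` in this basis gives `(P^s)₀₀ = ∑ₖ dₖ λₖ^s` with `d₀ = 1/n` and
`0 ≤ dₖ ≤ 2/n`. The mode `k = 0` contributes `(t+1)/n ≤ 2√t`. For `k ≥ 1` the spectral gap
`1 - λₖ ≥ (k/n)²` bounds the geometric sum by `min (t+1) (4n²/k²)`, and summing this over `k`,
split at `k ≈ n/√t`, gives `O(n√t)`.
-/

open Real Finset Matrix

lemma two_mul_sin_mul_sum_range_cos (x : ℝ) (N : ℕ) :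
    2 * sin (x / 2) * ∑ k ∈ range N, cos (k * x) = sin ((N - 1 / 2) * x) + sin (x / 2) := by
  induction N with
  | zero => simp [inv_mul_eq_div]
  | succ N ih =>
    rw [sum_range_succ, mul_add, ih, two_mul_sin_mul_cos,
      show x / 2 - N * x = -((N - 1 / 2) * x) by ring, sin_neg]
    push_cast
    ring_nf

lemma sum_range_cos_mul_pi_div {n m : ℕ} (hm₀ : 0 < m) (hm : m < 2 * n) :
    ∑ k ∈ range n, cos (k * (m * π / n)) = (1 - (-1) ^ m) / 2 := by
  have hn : (n : ℝ) ≠ 0 := by norm_cast; omega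
  have hsin : sin (m * π / n / 2) ≠ 0 := by
    refine (sin_pos_of_pos_of_lt_pi (by positivity) ?_).ne'
    rw [div_div, div_lt_iff₀ (by positivity)]
    have : (m : ℝ) < 2 * n := by exact_mod_cast hm
    nlinarith [pi_pos]
  have key := two_mul_sin_mul_sum_range_cos (m * π / n) n
  have harg : (n - 1 / 2) * (m * π / n) = m * π - m * π / n / 2 := by field_simp
  rw [harg, sin_nat_mul_pi_sub] at key
  apply mul_left_cancel₀ (mul_ne_zero two_ne_zero hsin)
  linear_combination key

lemma sum_range_ite_mul_cos_mul_pi_div {n m : ℕ} (hn : 0 < n) (hm : m < 2 * n) :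
    ∑ k ∈ range n, (if k = 0 then 1 else 2) * cos (k * (m * π / n)) =
      if m = 0 then 2 * (n : ℝ) - 1 else -(-1) ^ m := by
  have hsplit : ∀ k ∈ range n, (if k = 0 then (1 : ℝ) else 2) * cos (k * (m * π / n)) =
      2 * cos (k * (m * π / n)) - if k = 0 then 1 else 0 := by
    intro k _
    split_ifs with hk <;> norm_num [hk]
  rw [sum_congr rfl hsplit, sum_sub_distrib, ← mul_sum, sum_ite_eq' _ _ (fun _ => (1 : ℝ)),
    if_pos (mem_range.2 hn)]
  split_ifs with hm₀
  · simp [hm₀]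
  · rw [sum_range_cos_mul_pi_div (Nat.pos_of_ne_zero hm₀) hm]; ring

lemma cos_sub_add_cos_add_cos_add (x y : ℝ) :
    cos (x - y) + cos x + cos (x + y) = (1 + 2 * cos y) * cos x := by
  rw [cos_sub, cos_add]; ring

lemma geom_sum_le_of_abs_le_one {x : ℝ} (hx : |x| ≤ 1) (N : ℕ) : ∑ s ∈ range N, x ^ s ≤ N := by
  calc ∑ s ∈ range N, x ^ s ≤ ∑ s ∈ range N, (1 : ℝ) :=
        sum_le_sum fun s _ => (le_abs_self _).trans (abs_pow x s ▸ pow_le_one₀ (abs_nonneg x) hx)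
    _ = N := by simp

lemma geom_sum_le_two_div_one_sub {x : ℝ} (hx : |x| ≤ 1) (hx₁ : x < 1) (N : ℕ) :
    ∑ s ∈ range N, x ^ s ≤ 2 / (1 - x) := by
  have hpow : -1 ≤ x ^ N := (abs_le.1 (abs_pow x N ▸ pow_le_one₀ (abs_nonneg x) hx)).1
  rw [geom_sum_eq hx₁.ne, ← neg_div_neg_eq, neg_sub, neg_sub]
  exact div_le_div_of_nonneg_right (by linarith) (by linarith)

lemma sum_Ico_min_sq_div_le {T a : ℝ} (hT : 0 < T) (ha : 0 ≤ a) (N : ℕ) :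
    ∑ k ∈ Ico 1 N, min T ((a / k) ^ 2) ≤ T + 3 * a * √T := by
  set M := ⌈a / √T⌉₊
  have hsT : 0 < √T := sqrt_pos.2 hT
  have hM : a ≤ M * √T := (div_le_iff₀ hsT).1 (Nat.le_ceil _)
  have hM' : (M : ℝ) * T ≤ a * √T + T := by
    have := (Nat.ceil_lt_add_one (div_nonneg ha hsT.le)).le
    calc (M : ℝ) * T ≤ (a / √T + 1) * T := by gcongr
      _ = a * √T + T := by field_simp; linear_combination (-a) * sq_sqrt hT.le
  have hhead : ∑ k ∈ Ico 1 N with k ≤ M, min T ((a / k) ^ 2) ≤ M * T := by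
    have hcard : #{k ∈ Ico 1 N | k ≤ M} ≤ M := by
      calc #{k ∈ Ico 1 N | k ≤ M} ≤ #(Icc 1 M) := card_le_card fun k hk => by
              simp only [mem_filter, mem_Ico, mem_Icc] at hk ⊢; omega
        _ = M := by simp
    calc ∑ k ∈ Ico 1 N with k ≤ M, min T ((a / k) ^ 2)
        ≤ ∑ k ∈ Ico 1 N with k ≤ M, T := sum_le_sum fun _ _ => min_le_left _ _
      _ ≤ M * T := by rw [sum_const, nsmul_eq_mul]; gcongr
  have htail : ∑ k ∈ Ico 1 N with ¬k ≤ M, min T ((a / k) ^ 2) ≤ 2 * a * √T := by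
    calc ∑ k ∈ Ico 1 N with ¬k ≤ M, min T ((a / k) ^ 2)
        ≤ ∑ k ∈ Ioo M N, a ^ 2 * ((k : ℝ) ^ 2)⁻¹ := by
          refine sum_le_sum_of_subset_of_nonneg (fun k hk => ?_) (fun _ _ _ => by positivity)
            |>.trans' (sum_le_sum fun k _ => ?_)
          · simp only [mem_filter, mem_Ico, mem_Ioo] at hk ⊢; omega
          · rw [div_pow, div_eq_mul_inv]; exact min_le_right _ _
      _ ≤ a ^ 2 * (2 / (M + 1)) := by rw [← mul_sum]; gcongr; exact sum_Ioo_inv_sq_le M N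
      _ ≤ 2 * a * √T := by
          rw [mul_div_assoc', div_le_iff₀ (by positivity)]
          nlinarith [mul_le_mul_of_nonneg_left hM ha]
  rw [← sum_filter_add_sum_filter_not _ (· ≤ M)]
  linarith

lemma sq_div_le_one_sub_eigenvalue {n k : ℕ} (hk : k ≤ n) :
    ((k : ℝ) / n) ^ 2 ≤ 1 - (1 + 2 * cos (k * π / n)) / 3 := by
  have hx : |(k * π / n : ℝ)| ≤ π := by
    rw [abs_of_nonneg (by positivity), mul_div_right_comm]
    exact mul_le_of_le_one_left pi_pos.le (div_le_one_of_le₀ (by exact_mod_cast hk) (by positivity))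
  have hcos := cos_le_one_sub_mul_cos_sq hx
  rw [show 2 / π ^ 2 * (k * π / n) ^ 2 = 2 * ((k : ℝ) / n) ^ 2 by field_simp] at hcos
  nlinarith [sq_nonneg ((k : ℝ) / n)]

lemma geom_sum_eigenvalue_le {n k : ℕ} (hk : 1 ≤ k) (hkn : k ≤ n) (N : ℕ) :
    ∑ s ∈ range N, ((1 + 2 * cos (k * π / n)) / 3) ^ s ≤ min (N : ℝ) ((2 * n / k) ^ 2) := by
  have hgap := sq_div_le_one_sub_eigenvalue hkn
  set x := (1 + 2 * cos (k * π / n)) / 3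
  have hk₀ : (0 : ℝ) < k := by exact_mod_cast hk
  have hn₀ : (0 : ℝ) < n := by exact_mod_cast hk.trans hkn
  have hpos : 0 < ((k : ℝ) / n) ^ 2 := by positivity
  have hx : |x| ≤ 1 :=
    abs_le.2 ⟨by simp only [x]; linarith [neg_one_le_cos (k * π / n)], by linarith⟩
  refine le_min (geom_sum_le_of_abs_le_one hx N)
    ((geom_sum_le_two_div_one_sub hx (by linarith) N).trans ?_)
  calc 2 / (1 - x) ≤ 2 / ((k : ℝ) / n) ^ 2 := by gcongr
    _ ≤ 4 / ((k : ℝ) / n) ^ 2 := by gcongr; norm_num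
    _ = (2 * n / k) ^ 2 := by field_simp; ring

lemma Matrix.pow_mulVec_sum_smul_of_mulVec_eq_smul {ι κ R : Type*} [Fintype ι] [DecidableEq ι]
    [CommRing R] (A : Matrix ι ι R) (v : κ → ι → R) (μ : κ → R)
    (hv : ∀ k, A *ᵥ v k = μ k • v k) (s : Finset κ) (c : κ → R) (m : ℕ) :
    A ^ m *ᵥ ∑ k ∈ s, c k • v k = ∑ k ∈ s, (c k * μ k ^ m) • v k := by
  induction m with
  | zero => simp
  | succ m ih =>
    rw [pow_succ', ← mulVec_mulVec, ih, mulVec_sum]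
    refine sum_congr rfl fun k _ => ?_
    rw [mulVec_smul, hv, smul_smul, pow_succ]
    ring_nf

noncomputable def cosMode (θ : ℝ) (j : ℤ) : ℝ := cos ((2 * j + 1) * θ)

lemma sum_smul_cosMode {n : ℕ} (hn : 0 < n) :
    ∑ k ∈ range n, ((if k = 0 then 1 else 2) / n * cos (k * π / (2 * n))) •
      (fun j : Fin n => cosMode (k * π / (2 * n)) j) = Pi.single ⟨0, hn⟩ 1 := by
  have hn' : (n : ℝ) ≠ 0 := by positivity
  ext i
  have hterm : ∀ k ∈ range n,
      (if k = 0 then 1 else 2) / n * cos (k * π / (2 * n)) * cosMode (k * π / (2 * n)) i =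
        ((if k = 0 then 1 else 2) * cos (k * ((i : ℕ) * π / n)) +
          (if k = 0 then 1 else 2) * cos (k * (((i + 1 : ℕ) : ℝ) * π / n))) / (2 * n) := by
    intro k _
    have h := two_mul_cos_mul_cos ((2 * (i : ℕ) + 1) * (k * π / (2 * n))) (k * π / (2 * n))
    rw [show (2 * (i : ℕ) + 1) * (k * π / (2 * n)) - k * π / (2 * n) = k * ((i : ℕ) * π / n) by
        field_simp; ring,
      show (2 * (i : ℕ) + 1) * (k * π / (2 * n)) + k * π / (2 * n) =
        k * (((i + 1 : ℕ) : ℝ) * π / n) by push_cast; field_simp; ring] at h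
    rw [← mul_add, ← h]
    simp only [cosMode, Int.cast_natCast]
    field_simp
  simp only [Finset.sum_apply, Pi.smul_apply, smul_eq_mul]
  rw [sum_congr rfl hterm, ← sum_div, sum_add_distrib,
    sum_range_ite_mul_cos_mul_pi_div hn (by omega), sum_range_ite_mul_cos_mul_pi_div hn (by omega),
    Pi.single_apply]
  rcases Nat.eq_zero_or_pos i with hi | hi
  · simp [hi, Fin.ext_iff, hn.ne']
  · simp only [hi.ne', if_false, Nat.add_one_ne_zero, pow_succ, Fin.ext_iff]
    ring

noncomputable def lazyPathWalk (n : ℕ) : Matrix (Fin n) (Fin n) ℝ := fun i j =>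
  if ((i : ℕ) = 0 ∧ (j : ℕ) = 0) ∨ ((i : ℕ) = n - 1 ∧ (j : ℕ) = n - 1) then 2/3
  else if (i : ℕ) ≤ (j : ℕ) + 1 ∧ (j : ℕ) ≤ (i : ℕ) + 1 then 1/3 else 0

namespace lazyPathWalk

variable {n : ℕ}

-- Truncated subtraction `i - 1` and the `min` reflect the walk at the two ends.
lemma row_eq (hn : 2 ≤ n) (i : Fin n) :
    lazyPathWalk n i = (3 : ℝ)⁻¹ • (Pi.single ⟨i - 1, by omega⟩ 1 + Pi.single i 1 +
      Pi.single ⟨min (i + 1) (n - 1), by omega⟩ 1) := by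
  ext j
  have := i.2; have := j.2
  simp only [lazyPathWalk, Pi.smul_apply, Pi.add_apply, Pi.single_apply, Fin.ext_iff, smul_eq_mul]
  split_ifs <;> first | omega | norm_num

lemma mulVec_apply (hn : 2 ≤ n) (f : ℤ → ℝ) (hf₀ : f (-1) = f 0) (hfn : f n = f (n - 1))
    (i : Fin n) :
    (lazyPathWalk n *ᵥ fun j => f j) i = (f (i - 1) + f i + f (i + 1)) / 3 := by
  have hprev : f ((i - 1 : ℕ) : ℤ) = f (i - 1) := by
    rcases Nat.eq_zero_or_pos i with h | h
    · simp [h, hf₀]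
    · rw [Nat.cast_sub h]; rfl
  have hnext : f ((min (i + 1) (n - 1) : ℕ) : ℤ) = f (i + 1) := by
    rcases lt_or_eq_of_le (Nat.le_sub_one_of_lt i.2) with h | h
    · rw [min_eq_left (by omega)]; push_cast; rfl
    · have hi : ((i : ℕ) : ℤ) = n - 1 := by omega
      rw [min_eq_right (by omega), ← h, hi, sub_add_cancel, hfn]
  simp only [mulVec, row_eq hn, smul_dotProduct, add_dotProduct, single_one_dotProduct, hprev,
    hnext, smul_eq_mul]
  ring

lemma mulVec_cosMode (hn : 2 ≤ n) {θ : ℝ} (hθ : sin (2 * n * θ) = 0) :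
    lazyPathWalk n *ᵥ (fun j : Fin n => cosMode θ j) =
      ((1 + 2 * cos (2 * θ)) / 3) • fun j : Fin n => cosMode θ j := by
  have h₀ : cosMode θ (-1) = cosMode θ 0 := by
    simp only [cosMode]; push_cast
    rw [show (2 * (-1) + 1) * θ = -θ by ring, cos_neg]; simp
  have hN : cosMode θ n = cosMode θ (n - 1) := by
    simp only [cosMode, Int.cast_natCast, Int.cast_sub, Int.cast_one]
    rw [show (2 * n + 1) * θ = 2 * n * θ + θ by ring,
      show (2 * (n - 1) + 1) * θ = 2 * n * θ - θ by ring, cos_add, cos_sub, hθ]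
    ring
  ext i
  rw [mulVec_apply hn _ h₀ hN, Pi.smul_apply, smul_eq_mul]
  simp only [cosMode, Int.cast_sub, Int.cast_add, Int.cast_one]
  have h := cos_sub_add_cos_add_cos_add ((2 * ((i : ℕ) : ℤ) + 1) * θ) (2 * θ)
  ring_nf at h ⊢
  linarith

lemma pow_apply_zero_zero (hn : 2 ≤ n) (m : ℕ) :
    (lazyPathWalk n ^ m) ⟨0, Nat.zero_lt_of_lt hn⟩ ⟨0, Nat.zero_lt_of_lt hn⟩ = ∑ k ∈ range n,
      (if k = 0 then 1 else 2) / n * cos (k * π / (2 * n)) ^ 2 *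
        ((1 + 2 * cos (k * π / n)) / 3) ^ m := by
  have hn' : (n : ℝ) ≠ 0 := by positivity
  have hmode : ∀ k : ℕ, lazyPathWalk n *ᵥ (fun j : Fin n => cosMode (k * π / (2 * n)) j) =
      ((1 + 2 * cos (k * π / n)) / 3) • fun j : Fin n => cosMode (k * π / (2 * n)) j := by
    intro k
    have hθ : 2 * n * (k * π / (2 * n)) = k * π := by field_simp
    rw [mulVec_cosMode hn (by rw [hθ]; exact sin_nat_mul_pi k), mul_div_assoc',
      mul_div_mul_left _ _ two_ne_zero]
  have h := congrFun (Matrix.pow_mulVec_sum_smul_of_mulVec_eq_smul _ _ _ hmode (range n)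
    (fun k => (if k = 0 then 1 else 2) / n * cos (k * π / (2 * n))) m) ⟨0, Nat.zero_lt_of_lt hn⟩
  rw [sum_smul_cosMode (by omega), mulVec_single_one] at h
  rw [← col_apply (lazyPathWalk n ^ m), h, Finset.sum_apply]
  refine sum_congr rfl fun k _ => ?_
  simp [cosMode]; ring

lemma sum_pow_apply_zero_zero_le (hn : 2 ≤ n) (t : ℕ) :
    (∑ s ∈ range (t + 1), lazyPathWalk n ^ s) ⟨0, Nat.zero_lt_of_lt hn⟩ ⟨0, Nat.zero_lt_of_lt hn⟩ ≤
      3 * (t + 1) / n + 12 * √(t + 1) := by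
  have hn₀ : (0 : ℝ) < n := by positivity
  set N := t + 1
  have hmode : ∀ k ∈ Ico 1 n, ∑ s ∈ range N,
      (if k = 0 then 1 else 2) / n * cos (k * π / (2 * n)) ^ 2 * ((1 + 2 * cos (k * π / n)) / 3) ^ s
        ≤ 2 / n * min (N : ℝ) ((2 * n / k) ^ 2) := by
    intro k hk
    obtain ⟨hk₁, hkn⟩ := mem_Ico.1 hk
    rw [← mul_sum, if_neg (by omega)]
    have hweight : 2 / n * cos (k * π / (2 * n)) ^ 2 ≤ 2 / n :=
      mul_le_of_le_one_right (by positivity) (sq_le_one_iff_abs_le_one _ |>.2 (abs_cos_le_one _))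
    exact (mul_le_mul_of_nonneg_left (geom_sum_eigenvalue_le hk₁ hkn.le N) (by positivity)).trans
      (mul_le_mul_of_nonneg_right hweight (le_min (by positivity) (by positivity)))
  have hzero : ∑ s ∈ range N, (if 0 = 0 then 1 else 2) / n * cos ((0 : ℕ) * π / (2 * n)) ^ 2 *
      ((1 + 2 * cos ((0 : ℕ) * π / n)) / 3) ^ s = (N : ℝ) / n := by
    norm_num [div_eq_mul_inv]
  have hrest : ∑ k ∈ Ico 1 n, 2 / n * min (N : ℝ) ((2 * n / k) ^ 2) ≤ 2 * N / n + 12 * √N := by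
    rw [← mul_sum]
    calc 2 / n * ∑ k ∈ Ico 1 n, min (N : ℝ) ((2 * n / k) ^ 2)
        ≤ 2 / n * (N + 3 * (2 * n) * √N) := by
          gcongr; exact sum_Ico_min_sq_div_le (by positivity) (by positivity) n
      _ = 2 * N / n + 12 * √N := by field_simp; ring
  rw [Matrix.sum_apply]
  simp_rw [pow_apply_zero_zero hn]
  rw [sum_comm, range_eq_Ico, sum_eq_sum_Ico_succ_bot (by omega), zero_add, hzero]
  have hN : ((N : ℕ) : ℝ) = t + 1 := by simp [N]
  rw [← hN]
  have h3 : 3 * (N : ℝ) / n = N / n + 2 * N / n := by ring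
  rw [h3, add_assoc]
  exact add_le_add le_rfl ((sum_le_sum hmode).trans hrest)

end lazyPathWalk

/-- `P` is the transition matrix of the lazy reflecting random walk on the path
with `n ≥ 2` vertices (indexed by `Fin n`, so vertex `1` of the paper is index
`0`).  The `(1,1)` entry of `I + P + ⋯ + P^t`, which is the expected number of
returns `h_{1,1}(t)`, is at most `c√t` for all `1 ≤ t ≤ n²`, where `c > 0` is
an absolute constant independent of `n`. -/
theorem stmt_9 : ∃ c : ℝ, 0 < c ∧
    ∀ (n : ℕ) (hn : 2 ≤ n) (P : Matrix (Fin n) (Fin n) ℝ),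
    (∀ i j : Fin n, P i j =
      if ((i : ℕ) = 0 ∧ (j : ℕ) = 0) ∨ ((i : ℕ) = n - 1 ∧ (j : ℕ) = n - 1) then (2/3 : ℝ)
      else if (i : ℕ) ≤ (j : ℕ) + 1 ∧ (j : ℕ) ≤ (i : ℕ) + 1 then (1/3 : ℝ) else 0) →
    ∀ t : ℕ, 1 ≤ t → t ≤ n ^ 2 →
      (∑ s ∈ Finset.range (t + 1), P ^ s) ⟨0, by omega⟩ ⟨0, by omega⟩ ≤ c * Real.sqrt t := by
  refine ⟨30, by norm_num, fun n hn P hP t ht htn => ?_⟩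
  obtain rfl : P = lazyPathWalk n := Matrix.ext hP
  refine (lazyPathWalk.sum_pow_apply_zero_zero_le hn t).trans ?_
  have ht₁ : (1 : ℝ) ≤ t := by exact_mod_cast ht
  have hsqrt_le : √t ≤ n := Real.sqrt_le_iff.2 ⟨by positivity, by exact_mod_cast htn⟩
  have hsqrt_sq : √t * √t = t := Real.mul_self_sqrt (by positivity)
  have hfirst : (t + 1) / n ≤ 2 * √t := by
    rw [div_le_iff₀ (by positivity)]
    nlinarith [Real.sqrt_nonneg t]
  have hsecond : √(t + 1) ≤ 2 * √t := Real.sqrt_le_iff.2 ⟨by positivity, by nlinarith⟩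
  rw [mul_div_assoc]
  linarith
end

section
/- Fix a time t ≥ 1 with t ≤ n². For the lazy random walk on the cycle C_{2n}, the probability q(t) that the walk started at vertex 1 is again at vertex 1 at time t satisfies q(t) ≤ C/√t for some absolute constant C > 0 independent of n and t. -/
/-!
Fourier analysis on `ZMod m`: the characters `j ↦ ψ (k * j)`, with `ψ = ZMod.stdAddChar`, are
eigenvectors of the walk with eigenvalues `λ_k = (1 + 2 cos (2πk/m)) / 3`, and orthogonality of
characters gives `m · (P^t)_{ii} = ∑_k λ_k^t`. Taking `k` in `(-m/2, m/2]`, the bound `cos θ ≤ 1 - 2θ²/π²` gives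
`|λ_k| ≤ exp (-2k²/m²)`, so the sum is dominated by a Gaussian sum
`∑_k exp (-2tk²/m²) ≲ 1 + m/√t`. Hence `(P^t)_{ii} ≲ 1/m + 1/√t`, and `1/m ≤ 1/√t` when `t ≤ n²`.
-/

open Finset Real ZMod Matrix

theorem Matrix.pow_mulVec_of_mulVec_eq_smul {n R : Type*} [Fintype n] [DecidableEq n]
    [CommSemiring R] {A : Matrix n n R} {v : n → R} {c : R} (h : A *ᵥ v = c • v) (t : ℕ) :
    A ^ t *ᵥ v = c ^ t • v := by
  induction t with
  | zero => simp
  | succ t ih =>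
    rw [pow_succ', ← mulVec_mulVec, ih, mulVec_smul, h, smul_smul, pow_succ]

theorem abs_one_add_two_cos_div_three_le {θ : ℝ} (hθ : |θ| ≤ π) :
    |(1 + 2 * cos θ) / 3| ≤ 1 - θ ^ 2 / (2 * π ^ 2) := by
  have hcos := cos_le_one_sub_mul_cos_sq hθ
  have hx0 : 0 ≤ θ ^ 2 / π ^ 2 := by positivity
  have hx1 : θ ^ 2 / π ^ 2 ≤ 1 := by
    rw [div_le_one (by positivity)]
    exact sq_le_sq' (abs_le.1 hθ).1 (abs_le.1 hθ).2
  have e1 : 2 / π ^ 2 * θ ^ 2 = 2 * (θ ^ 2 / π ^ 2) := by ring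
  have e2 : θ ^ 2 / (2 * π ^ 2) = θ ^ 2 / π ^ 2 / 2 := by ring
  rw [abs_le]
  constructor <;> linarith [neg_one_le_cos θ]

theorem one_div_one_sub_exp_neg_le {x : ℝ} (hx : 0 < x) : 1 / (1 - exp (-x)) ≤ 1 + 1 / x := by
  have h : x / (1 + x) ≤ 1 - exp (-x) := by
    have hexp : exp (-x) ≤ 1 / (1 + x) := by
      rw [exp_neg, one_div]
      exact inv_anti₀ (by positivity) (by linarith [add_one_le_exp x])
    have hfrac : x / (1 + x) = 1 - 1 / (1 + x) := by field_simp; ring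
    linarith
  calc 1 / (1 - exp (-x)) ≤ 1 / (x / (1 + x)) := one_div_le_one_div_of_le (by positivity) h
    _ = 1 + 1 / x := by field_simp; ring

theorem sum_range_exp_neg_mul_sq_le {a : ℝ} (ha : 0 < a) (M : ℕ) :
    ∑ j ∈ range M, exp (-(a * j ^ 2)) ≤ exp 1 * (1 + 1 / (2 * √a)) := by
  set r := √a
  have hr : 0 < r := sqrt_pos.2 ha
  have hq : exp (-(2 * r)) < 1 := exp_lt_one_iff.2 (by linarith)
  -- `a j² = (r j)² ≥ 2 r j - 1` compares the Gaussian with a geometric series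
  have hterm (j : ℕ) : exp (-(a * j ^ 2)) ≤ exp 1 * exp (-(2 * r)) ^ j := by
    rw [← exp_nat_mul, ← exp_add, exp_le_exp, ← sq_sqrt ha.le]
    nlinarith [sq_nonneg (r * j - 1)]
  calc ∑ j ∈ range M, exp (-(a * j ^ 2)) ≤ exp 1 * ∑ j ∈ range M, exp (-(2 * r)) ^ j := by
        rw [mul_sum]
        exact sum_le_sum fun j _ ↦ hterm j
    _ ≤ exp 1 * (1 / (1 - exp (-(2 * r)))) := by
        gcongr
        simpa using geom_sum_Ico_le_of_lt_one (m := 0) (n := M) (exp_pos _).le hq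
    _ ≤ exp 1 * (1 + 1 / (2 * r)) := by
        gcongr
        exact one_div_one_sub_exp_neg_le (by positivity)

section CharactersOfZMod

variable {m : ℕ} [NeZero m]

theorem sum_val_eq_sum_range {M : Type*} [AddCommMonoid M] (g : ℕ → M) :
    ∑ k : ZMod m, g k.val = ∑ j ∈ range m, g j :=
  sum_nbij (·.val) (fun k _ ↦ mem_range.2 k.val_lt) (val_injective m).injOn
    (fun j hj ↦ ⟨j, mem_coe.2 (mem_univ _), val_cast_of_lt (mem_range.1 hj)⟩) fun _ _ ↦ rfl

theorem sum_comp_natAbs_valMinAbs_le {g : ℕ → ℝ} (hg : ∀ j, 0 ≤ g j) :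
    ∑ k : ZMod m, g k.valMinAbs.natAbs ≤ 2 * ∑ j ∈ range m, g j := by
  have hterm (k : ZMod m) : g k.valMinAbs.natAbs ≤ g k.val + g (-k).val := by
    rw [valMinAbs_natAbs_eq_min, neg_val]
    split_ifs with hk
    · simp [hk, hg]
    · rcases min_choice k.val (m - k.val) with h | h <;> rw [h]
      · linarith [hg (m - k.val)]
      · linarith [hg k.val]
  have hneg : ∑ k : ZMod m, g (-k).val = ∑ k : ZMod m, g k.val :=
    Fintype.sum_equiv (Equiv.neg _) _ _ fun _ ↦ rfl
  calc ∑ k : ZMod m, g k.valMinAbs.natAbs ≤ ∑ k : ZMod m, (g k.val + g (-k).val) :=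
        sum_le_sum fun k _ ↦ hterm k
    _ = 2 * ∑ j ∈ range m, g j := by
        rw [sum_add_distrib, hneg, sum_val_eq_sum_range]
        ring

theorem stdAddChar_add_stdAddChar_neg (k : ZMod m) :
    stdAddChar k + stdAddChar (-k) = (2 * cos (2 * π * k.valMinAbs / m) : ℝ) := by
  conv_lhs => rw [← coe_valMinAbs k, ← Int.cast_neg, stdAddChar_coe, stdAddChar_coe]
  push_cast
  rw [Complex.two_cos]
  congr 1 <;> congr 1 <;> ring

theorem natCast_mul_apply_self_eq_sum_of_mulVec_stdAddChar (A : Matrix (ZMod m) (ZMod m) ℂ)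
    (μ : ZMod m → ℂ)
    (hA : ∀ k, A *ᵥ (fun j ↦ stdAddChar (k * j)) = μ k • fun j ↦ stdAddChar (k * j))
    (i : ZMod m) : m * A i i = ∑ k, μ k := by
  classical
  calc (m : ℂ) * A i i = ∑ j, A i j * ∑ k, stdAddChar (k * (j - i)) := by
        simp only [AddChar.sum_mulShift _ (isPrimitive_stdAddChar m), sub_eq_zero, Nat.cast_ite,
          Nat.cast_zero, mul_ite, mul_zero, sum_ite_eq', mem_univ, if_true, ZMod.card]
        ring
    _ = ∑ k, stdAddChar (-(k * i)) * (A *ᵥ fun j ↦ stdAddChar (k * j)) i := by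
        simp_rw [mul_sum, mulVec, dotProduct, mul_sum]
        rw [sum_comm]
        refine sum_congr rfl fun k _ ↦ sum_congr rfl fun j _ ↦ ?_
        rw [mul_sub, sub_eq_neg_add, AddChar.map_add_eq_mul]
        ring
    _ = ∑ k, μ k := by
        refine sum_congr rfl fun k _ ↦ ?_
        rw [hA, Pi.smul_apply, smul_eq_mul, mul_left_comm, ← AddChar.map_add_eq_mul,
          neg_add_cancel, AddChar.map_zero_eq_one, mul_one]

end CharactersOfZMod

section LazyCycleWalk

variable {m : ℕ} [NeZero m]

def IsLazyCycleWalk (P : Matrix (ZMod m) (ZMod m) ℝ) : Prop :=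
  ∀ i j : ZMod m, P i j = if j = i - 1 ∨ j = i ∨ j = i + 1 then (1/3 : ℝ) else 0

noncomputable def lazyCycleEigenvalue (k : ZMod m) : ℝ :=
  (1 + 2 * cos (2 * π * k.valMinAbs / m)) / 3

theorem abs_lazyCycleEigenvalue_le (k : ZMod m) :
    |lazyCycleEigenvalue k| ≤ exp (-(2 / m ^ 2 * k.valMinAbs.natAbs ^ 2)) := by
  have hm : (0 : ℝ) < m := by exact_mod_cast NeZero.pos m
  have habs : ((k.valMinAbs.natAbs : ℕ) : ℝ) = |(k.valMinAbs : ℝ)| := by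
    simp only [Nat.cast_natAbs, Int.cast_abs]
  have hθ : |2 * π * k.valMinAbs / m| ≤ π := by
    have h2 : 2 * (k.valMinAbs.natAbs : ℝ) ≤ m := by
      have := natAbs_valMinAbs_le k
      exact_mod_cast (by omega : 2 * k.valMinAbs.natAbs ≤ m)
    rw [abs_div, abs_mul, abs_of_pos (by positivity : 0 < 2 * π), abs_of_pos hm,
      div_le_iff₀ hm, ← habs]
    nlinarith [pi_pos]
  calc |lazyCycleEigenvalue k| ≤ 1 - (2 * π * k.valMinAbs / m) ^ 2 / (2 * π ^ 2) :=
        abs_one_add_two_cos_div_three_le hθ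
    _ = 1 - 2 / m ^ 2 * k.valMinAbs.natAbs ^ 2 := by
        rw [habs, sq_abs]
        field_simp
    _ ≤ exp (-(2 / m ^ 2 * k.valMinAbs.natAbs ^ 2)) := one_sub_le_exp_neg _

theorem lazyCycleEigenvalue_pow_le (k : ZMod m) (t : ℕ) :
    lazyCycleEigenvalue k ^ t ≤ exp (-(2 * t / m ^ 2 * k.valMinAbs.natAbs ^ 2)) :=
  calc lazyCycleEigenvalue k ^ t ≤ |lazyCycleEigenvalue k| ^ t := by
        rw [← abs_pow]
        exact le_abs_self _
    _ ≤ exp (-(2 / m ^ 2 * k.valMinAbs.natAbs ^ 2)) ^ t :=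
        pow_le_pow_left₀ (abs_nonneg _) (abs_lazyCycleEigenvalue_le k) t
    _ = exp (-(2 * t / m ^ 2 * k.valMinAbs.natAbs ^ 2)) := by
        rw [← exp_nat_mul]
        ring_nf

namespace IsLazyCycleWalk

theorem sum_mul (hm : 3 ≤ m) {P : Matrix (ZMod m) (ZMod m) ℝ} (hP : IsLazyCycleWalk P)
    (f : ZMod m → ℂ) (i : ZMod m) :
    ∑ j, (P i j : ℂ) * f j = (f (i - 1) + f i + f (i + 1)) / 3 := by
  classical
  have hne (a : ℕ) (ha : 0 < a) (ham : a < m) : (a : ZMod m) ≠ 0 := fun h ↦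
    (Nat.le_of_dvd ha ((natCast_eq_zero_iff a m).1 h)).not_gt ham
  have h1 : (1 : ZMod m) ≠ 0 := by exact_mod_cast hne 1 one_pos (by omega)
  have h2 : (2 : ZMod m) ≠ 0 := by exact_mod_cast hne 2 two_pos (by omega)
  have hP' (j : ZMod m) :
      (P i j : ℂ) = if j ∈ ({i - 1, i, i + 1} : Finset (ZMod m)) then 1 / 3 else 0 := by
    rw [hP, apply_ite (fun x : ℝ ↦ (x : ℂ))]
    simp
  simp_rw [hP', ite_mul, zero_mul, sum_ite_mem, univ_inter]
  rw [sum_insert, sum_insert, sum_singleton]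
  · ring
  · simpa using h1
  · simp only [mem_insert, mem_singleton, not_or]
    exact ⟨fun h ↦ h1 (by linear_combination -h), fun h ↦ h2 (by linear_combination -h)⟩

theorem mulVec_stdAddChar (hm : 3 ≤ m) {P : Matrix (ZMod m) (ZMod m) ℝ}
    (hP : IsLazyCycleWalk P) (k : ZMod m) :
    P.map (↑) *ᵥ (fun j ↦ stdAddChar (k * j)) =
      (lazyCycleEigenvalue k : ℂ) • fun j ↦ stdAddChar (k * j) := by
  ext i
  simp only [mulVec, dotProduct, map_apply, Pi.smul_apply, smul_eq_mul]
  rw [hP.sum_mul hm, lazyCycleEigenvalue, Complex.ofReal_div, Complex.ofReal_add,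
    Complex.ofReal_one, ← stdAddChar_add_stdAddChar_neg, Complex.ofReal_ofNat, mul_sub, mul_add,
    mul_one, sub_eq_add_neg, AddChar.map_add_eq_mul, AddChar.map_add_eq_mul]
  ring

theorem natCast_mul_pow_apply_self (hm : 3 ≤ m) {P : Matrix (ZMod m) (ZMod m) ℝ}
    (hP : IsLazyCycleWalk P) (t : ℕ) (i : ZMod m) :
    m * (P ^ t) i i = ∑ k : ZMod m, lazyCycleEigenvalue k ^ t := by
  apply Complex.ofReal_injective
  push_cast
  refine natCast_mul_apply_self_eq_sum_of_mulVec_stdAddChar ((P ^ t).map ((↑) : ℝ → ℂ)) _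
    (fun k ↦ ?_) i
  have hmap : (P ^ t).map ((↑) : ℝ → ℂ) = P.map (↑) ^ t :=
    map_pow Complex.ofRealHom.mapMatrix P t
  rw [hmap]
  exact pow_mulVec_of_mulVec_eq_smul (hP.mulVec_stdAddChar hm k) t

theorem pow_apply_self_le (hm : 3 ≤ m) {P : Matrix (ZMod m) (ZMod m) ℝ}
    (hP : IsLazyCycleWalk P) {t : ℕ} (ht : 0 < t) (i : ZMod m) :
    (P ^ t) i i ≤ exp 1 * (2 / m + 1 / √(2 * t)) := by
  have hmr : (0 : ℝ) < m := by exact_mod_cast NeZero.pos m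
  set a : ℝ := 2 * t / m ^ 2
  have ha : 0 < a := by positivity
  have hsqrt : √a = √(2 * t) / m := by
    rw [sqrt_div' _ (by positivity), sqrt_sq hmr.le]
  have hsum : ∑ k : ZMod m, lazyCycleEigenvalue k ^ t ≤ 2 * (exp 1 * (1 + 1 / (2 * √a))) :=
    calc ∑ k : ZMod m, lazyCycleEigenvalue k ^ t
        ≤ ∑ k : ZMod m, exp (-(a * k.valMinAbs.natAbs ^ 2)) :=
          sum_le_sum fun k _ ↦ lazyCycleEigenvalue_pow_le k t
      _ ≤ 2 * ∑ j ∈ range m, exp (-(a * j ^ 2)) :=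
          sum_comp_natAbs_valMinAbs_le (g := fun j ↦ exp (-(a * j ^ 2))) fun _ ↦ (exp_pos _).le
      _ ≤ 2 * (exp 1 * (1 + 1 / (2 * √a))) := by
          gcongr
          exact sum_range_exp_neg_mul_sq_le ha m
  rw [← mul_le_mul_iff_of_pos_left hmr, hP.natCast_mul_pow_apply_self hm]
  calc ∑ k : ZMod m, lazyCycleEigenvalue k ^ t ≤ 2 * (exp 1 * (1 + 1 / (2 * √a))) := hsum
    _ = m * (exp 1 * (2 / m + 1 / √(2 * t))) := by
        rw [hsqrt]
        field_simp

end IsLazyCycleWalk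

end LazyCycleWalk

/-- For the lazy random walk on the cycle `C_{2n}`, the return probability
`q(t) = (P^t)_{1,1}` satisfies `q(t) ≤ C / √t` for `1 ≤ t ≤ n²`, with an
absolute constant `C` independent of `n` and `t`. -/
theorem stmt_10 : ∃ C : ℝ, 0 < C ∧
    ∀ (n m : ℕ), 1 ≤ n → m = 2 * n → ∀ [NeZero m],
    ∀ (P : Matrix (ZMod m) (ZMod m) ℝ),
    (∀ i j : ZMod m, P i j = if j = i - 1 ∨ j = i ∨ j = i + 1 then (1/3 : ℝ) else 0) →
    ∀ t : ℕ, 1 ≤ t → t ≤ n ^ 2 →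
      (P ^ t) 1 1 ≤ C / Real.sqrt t := by
  refine ⟨2 * exp 1, by positivity, ?_⟩
  intro n m hn hm _ P hP t ht htn
  obtain rfl | hn2 : n = 1 ∨ 2 ≤ n := by omega
  · -- on `C₂` the neighbours `i ± 1` coincide, but then `t = 1` and `P 1 1 = 1/3`
    obtain rfl : t = 1 := by simp at htn; omega
    rw [pow_one, hP, if_pos (Or.inr (Or.inl rfl))]
    norm_num
    linarith [add_one_le_exp 1]
  · have hsqrt_t : 0 < √t := sqrt_pos.2 (by exact_mod_cast ht)
    have hsqrt_le : √t ≤ n := by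
      rw [sqrt_le_left (by positivity)]
      exact_mod_cast htn
    have hm_le : 2 / (m : ℝ) ≤ 1 / √t := by
      rw [hm, Nat.cast_mul, Nat.cast_two, div_le_div_iff₀ (by positivity) hsqrt_t]
      linarith
    have hsqrt_2t : 1 / √(2 * t) ≤ 1 / √t :=
      one_div_le_one_div_of_le hsqrt_t (sqrt_le_sqrt (by linarith))
    calc (P ^ t) 1 1 ≤ exp 1 * (2 / m + 1 / √(2 * t)) :=
          IsLazyCycleWalk.pow_apply_self_le (by omega) hP ht 1
      _ ≤ exp 1 * (1 / √t + 1 / √t) := by gcongr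
      _ = 2 * exp 1 / √t := by ring
end

section
/- With δ_t defined by δ_0 = 0, δ_{1,t+1} = κ + (2/3)δ_{1,t} + (1/3)δ_{2,t}, δ_{n,t+1} = κ + (2/3)δ_{n,t} + (1/3)δ_{n-1,t}, δ_{i,t+1} = (1/3)(δ_{i-1,t} + δ_{i,t} + δ_{i+1,t}) for 2 ≤ i ≤ n-1, one has monotonicity along the chain: δ_{i,t} ≥ δ_{i+1,t} for all i < n/2 and all t ≥ 0. -/
/-!
The step `δ_t ↦ δ_{t+1}` is an averaging operator with reflecting ends plus the source `κ` at
both endpoints, so it commutes with the reflection `i ↦ n + 1 - i`: every `δ_t` is a palindrome.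
For a palindrome that decreases on its first half, the differences of the next iterate are
`δ_{i,t+1} - δ_{i+1,t+1} = (δ_{i-1,t} - δ_{i+2,t}) / 3` in the interior and
`κ + (δ_{1,t} - δ_{3,t}) / 3` at the left end, both nonnegative, where at the middle of the chain
the palindrome property stands in for the missing half of the monotonicity.
-/

structure IsChainStep (n : ℕ) (κ : ℚ) (v w : ℕ → ℚ) : Prop where
  first : w 1 = κ + (2/3) * v 1 + (1/3) * v 2
  last : w n = κ + (2/3) * v n + (1/3) * v (n - 1)
  mid : ∀ i, 2 ≤ i → i ≤ n - 1 → w i = (1/3) * (v (i - 1) + v i + v (i + 1))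

def IsPalindrome (n : ℕ) (v : ℕ → ℚ) : Prop :=
  ∀ i j, 1 ≤ i → 1 ≤ j → i + j = n + 1 → v i = v j

def AntitoneOnFirstHalf (n : ℕ) (v : ℕ → ℚ) : Prop :=
  ∀ i, 1 ≤ i → 2 * i ≤ n → v (i + 1) ≤ v i

variable {n : ℕ} {κ : ℚ} {v w : ℕ → ℚ}

theorem IsPalindrome.of_eq_zero (hv : ∀ i, 1 ≤ i → i ≤ n → v i = 0) : IsPalindrome n v :=
  fun i j hi hj hij => by rw [hv i hi (by omega), hv j hj (by omega)]

theorem AntitoneOnFirstHalf.of_eq_zero (hv : ∀ i, 1 ≤ i → i ≤ n → v i = 0) :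
    AntitoneOnFirstHalf n v :=
  fun i hi hin => by rw [hv i hi (by omega), hv (i + 1) (by omega) (by omega)]

theorem AntitoneOnFirstHalf.add_two_le (hs : IsPalindrome n v) (ha : AntitoneOnFirstHalf n v)
    {i : ℕ} (hi : 1 ≤ i) (hin : 2 * i < n) : v (i + 2) ≤ v i := by
  have h₁ : v (i + 1) ≤ v i := ha i hi hin.le
  by_cases hin' : 2 * (i + 1) ≤ n
  · exact (ha (i + 1) (by omega) hin').trans h₁
  · exact (hs (i + 2) i (by omega) hi (by omega)).le

theorem IsChainStep.isPalindrome (h : IsChainStep n κ v w) (hn : 2 ≤ n) (hv : IsPalindrome n v) :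
    IsPalindrome n w := by
  have hends : w 1 = w n := by
    rw [h.first, h.last, hv 1 n le_rfl (by omega) (by omega),
      hv 2 (n - 1) (by omega) (by omega) (by omega)]
  intro i j hi hj hij
  rcases (show i = 1 ∨ j = 1 ∨ (2 ≤ i ∧ 2 ≤ j) by omega) with rfl | rfl | ⟨hi₂, hj₂⟩
  · rwa [show j = n by omega]
  · rw [show i = n by omega, hends]
  · rw [h.mid i hi₂ (by omega), h.mid j hj₂ (by omega), hv (i - 1) (j + 1) (by omega) (by omega)
      (by omega), hv i j hi hj hij, hv (i + 1) (j - 1) (by omega) (by omega) (by omega)]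
    ring

theorem IsChainStep.antitoneOnFirstHalf (h : IsChainStep n κ v w) (hn : 2 ≤ n) (hκ : 0 ≤ κ)
    (hs : IsPalindrome n v) (ha : AntitoneOnFirstHalf n v) : AntitoneOnFirstHalf n w := by
  intro i hi hin
  rcases hin.eq_or_lt with hin | hin
  · exact (h.isPalindrome hn hs (i + 1) i (by omega) hi (by omega)).le
  have h₂ := ha.add_two_le hs hi hin
  rcases hi.eq_or_lt with rfl | hi₂
  · rw [h.first, h.mid 2 le_rfl (by omega)]
    linarith
  · have h₀ : v i ≤ v (i - 1) := by
      simpa [Nat.sub_add_cancel hi] using ha (i - 1) (by omega) (by omega)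
    rw [h.mid i hi₂ (by omega), h.mid (i + 1) (by omega) (by omega), Nat.add_sub_cancel]
    linarith

/-- The recursion `δ_0 = 0`, `δ_{1,t+1} = κ + (2/3)δ_{1,t} + (1/3)δ_{2,t}`,
`δ_{n,t+1} = κ + (2/3)δ_{n,t} + (1/3)δ_{n-1,t}`,
`δ_{i,t+1} = (1/3)(δ_{i-1,t} + δ_{i,t} + δ_{i+1,t})` for `2 ≤ i ≤ n-1`,
is monotone along the chain: `δ_{i,t} ≥ δ_{i+1,t}` for all `i < n/2` and all `t ≥ 0`. -/
theorem stmt_12 (n : ℕ) (hn : 2 ≤ n) (κ : ℚ) (hκ : 0 < κ)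
    (δ : ℕ → ℕ → ℚ)
    (h0 : ∀ i, 1 ≤ i → i ≤ n → δ 0 i = 0)
    (h1 : ∀ t, δ (t + 1) 1 = κ + (2/3) * δ t 1 + (1/3) * δ t 2)
    (hend : ∀ t, δ (t + 1) n = κ + (2/3) * δ t n + (1/3) * δ t (n - 1))
    (hmid : ∀ t, ∀ i, 2 ≤ i → i ≤ n - 1 →
      δ (t + 1) i = (1/3) * (δ t (i - 1) + δ t i + δ t (i + 1))) :
    ∀ t, ∀ i, 1 ≤ i → 2 * i < n → δ t (i + 1) ≤ δ t i := by
  have hstep : ∀ t, IsChainStep n κ (δ t) (δ (t + 1)) := fun t => ⟨h1 t, hend t, hmid t⟩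
  have hinv : ∀ t, IsPalindrome n (δ t) ∧ AntitoneOnFirstHalf n (δ t) := by
    intro t
    induction t with
    | zero => exact ⟨.of_eq_zero h0, .of_eq_zero h0⟩
    | succ t ih =>
      exact ⟨(hstep t).isPalindrome hn ih.1, (hstep t).antitoneOnFirstHalf hn hκ.le ih.1 ih.2⟩
  intro t i hi hin
  exact (hinv t).2 i hi hin.le
end

section
/- Consider the configuration E_n = (1, 2, ..., n) under the HK-dynamics with confidence bound 1. For any agent i < n/2, the opinions of agents i and (n+1)-i remain unchanged for all times t < i. Consequently E_n takes at least ⌊n/2⌋ time steps to freeze, so f₁(n) = Ω(n). -/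
open scoped Classical

/-- One step of the Hegselmann–Krause dynamics with confidence bound `1`. -/
noncomputable def hkStep {n : ℕ} (x : Fin n → ℝ) : Fin n → ℝ := fun i =>
  (∑ j ∈ Finset.univ.filter (fun j => |x j - x i| ≤ 1), x j) /
    ((Finset.univ.filter (fun j => |x j - x i| ≤ 1)).card : ℝ)

private lemma avg_lt_of {n : ℕ} (S : Finset (Fin n)) (f : Fin n → ℝ) (c : ℝ) (m : Fin n)
    (hm : m ∈ S) (hle : ∀ j ∈ S, f j ≤ c) (hlt : f m < c) :
    (∑ j ∈ S, f j) / (S.card : ℝ) < c := by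
  have hpos : 0 < (S.card : ℝ) := by
    exact_mod_cast Finset.card_pos.mpr ⟨m, hm⟩
  rw [div_lt_iff₀ hpos]
  calc (∑ j ∈ S, f j) < ∑ _j ∈ S, c :=
        Finset.sum_lt_sum (fun j hj => hle j hj) ⟨m, hm, hlt⟩
    _ = (S.card : ℝ) * c := by rw [Finset.sum_const, nsmul_eq_mul]
    _ = c * (S.card : ℝ) := mul_comm _ _

private lemma avg_gt_of {n : ℕ} (S : Finset (Fin n)) (f : Fin n → ℝ) (c : ℝ) (m : Fin n)
    (hm : m ∈ S) (hle : ∀ j ∈ S, c ≤ f j) (hlt : c < f m) :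
    c < (∑ j ∈ S, f j) / (S.card : ℝ) := by
  have hpos : 0 < (S.card : ℝ) := by
    exact_mod_cast Finset.card_pos.mpr ⟨m, hm⟩
  rw [lt_div_iff₀ hpos]
  calc c * (S.card : ℝ) = ∑ _j ∈ S, c := by rw [Finset.sum_const, nsmul_eq_mul, mul_comm]
    _ < ∑ j ∈ S, f j := Finset.sum_lt_sum (fun j hj => hle j hj) ⟨m, hm, hlt⟩

private lemma hk_invariant (n : ℕ) (x : ℕ → Fin n → ℝ)
    (hx0 : ∀ i : Fin n, x 0 i = (i : ℕ) + 1)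
    (hup : ∀ t, x (t + 1) = hkStep (x t)) :
    ∀ t, 2 * t < n →
      ((∀ k : Fin n, t ≤ (k : ℕ) → (k : ℕ) + t + 1 ≤ n → x t k = (k : ℕ) + 1) ∧
       (∀ m : Fin n, (m : ℕ) < t → x t m < (t : ℝ) + 1) ∧
       (∀ m : Fin n, n ≤ (m : ℕ) + t → (n : ℝ) - t < x t m)) := by
  intro t
  induction t with
  | zero =>
    intro _
    refine ⟨fun k _ _ => by simpa using hx0 k, fun m hm => by omega, fun m hm => ?_⟩
    exact absurd m.isLt (by omega)
  | succ t ih =>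
    intro hn
    have h2t : 2 * t < n := by omega
    obtain ⟨ha, hb, hc⟩ := ih h2t
    -- value of agent t and agent n-1-t at time t
    refine ⟨?_, ?_, ?_⟩
    · -- middle agents
      intro k hk1 hk2
      have hk1' : t + 1 ≤ (k : ℕ) := hk1
      have hk2' : (k : ℕ) + t + 2 ≤ n := by omega
      have hkval : x t k = (k : ℕ) + 1 := ha k (by omega) (by omega)
      set a : Fin n := ⟨(k : ℕ) - 1, by omega⟩ with ha_def
      set c : Fin n := ⟨(k : ℕ) + 1, by omega⟩ with hc_def
      have hav : x t a = ((k : ℕ) : ℝ) := by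
        have := ha a (by simp [ha_def]; omega) (by simp [ha_def]; omega)
        rw [this]
        have : ((a : ℕ) : ℝ) = (k : ℕ) - 1 := by
          simp only [ha_def]
          push_cast [Nat.cast_sub (by omega : 1 ≤ (k : ℕ))]
          ring
        rw [this]; ring
      have hcv : x t c = ((k : ℕ) : ℝ) + 2 := by
        have := ha c (by simp [hc_def]; omega) (by simp [hc_def]; omega)
        rw [this]
        have : ((c : ℕ) : ℝ) = (k : ℕ) + 1 := by simp [hc_def]
        rw [this]; ring
      have hS : Finset.univ.filter (fun j => |x t j - x t k| ≤ 1) = {a, k, c} := by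
        ext j
        simp only [Finset.mem_filter, Finset.mem_univ, true_and, Finset.mem_insert,
          Finset.mem_singleton]
        constructor
        · intro hj
          rw [hkval, abs_le] at hj
          by_cases hjt : (j : ℕ) < t
          · exfalso
            have h1 : x t j < (t : ℝ) + 1 := hb j hjt
            have h2 : ((t : ℝ) + 1) ≤ ((k : ℕ) : ℝ) := by exact_mod_cast hk1'
            linarith [hj.1]
          · by_cases hjn : n ≤ (j : ℕ) + t
            · exfalso
              have h1 : (n : ℝ) - t < x t j := hc j hjn
              have h2 : ((k : ℕ) : ℝ) + (t : ℝ) + 2 ≤ (n : ℝ) := by exact_mod_cast hk2'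
              linarith [hj.2]
            · have hjv : x t j = (j : ℕ) + 1 := ha j (by omega) (by omega)
              rw [hjv] at hj
              have h1 : ((j : ℕ) : ℝ) ≤ (k : ℕ) + 1 := by linarith [hj.2]
              have h2 : ((k : ℕ) : ℝ) ≤ (j : ℕ) + 1 := by linarith [hj.1]
              have h1' : (j : ℕ) ≤ (k : ℕ) + 1 := by exact_mod_cast h1
              have h2' : (k : ℕ) ≤ (j : ℕ) + 1 := by exact_mod_cast h2
              have : (j : ℕ) = (k : ℕ) - 1 ∨ (j : ℕ) = (k : ℕ) ∨ (j : ℕ) = (k : ℕ) + 1 := by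
                omega
              rcases this with h | h | h
              · exact Or.inl (Fin.ext (by simp [ha_def, h]))
              · exact Or.inr (Or.inl (Fin.ext h))
              · exact Or.inr (Or.inr (Fin.ext (by simp [hc_def, h])))
        · intro hj
          rcases hj with h | h | h
          · subst h; rw [hav, hkval]
            rw [abs_le]; constructor <;> linarith
          · subst h; simp
          · subst h; rw [hcv, hkval]
            rw [abs_le]; constructor <;> linarith
      have hak : a ≠ k := by
        intro h
        have := congrArg Fin.val h
        simp [ha_def] at this
        omega
      have hac : a ≠ c := by
        intro h
        have := congrArg Fin.val h
        simp [ha_def, hc_def] at this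
      have hkc : k ≠ c := by
        intro h
        have := congrArg Fin.val h
        simp [hc_def] at this
      rw [hup t]
      show (∑ j ∈ Finset.univ.filter (fun j => |x t j - x t k| ≤ 1), x t j) /
        ((Finset.univ.filter (fun j => |x t j - x t k| ≤ 1)).card : ℝ) = _
      rw [hS]
      have hsum : ∑ j ∈ ({a, k, c} : Finset (Fin n)), x t j = x t a + x t k + x t c := by
        rw [Finset.sum_insert (by simp [hak, hac]), Finset.sum_insert (by simp [hkc]),
          Finset.sum_singleton]
        ring
      have hcard : (({a, k, c} : Finset (Fin n)).card : ℝ) = 3 := by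
        rw [Finset.card_insert_of_notMem (by simp [hak, hac]),
          Finset.card_insert_of_notMem (by simp [hkc]), Finset.card_singleton]
        norm_num
      rw [hsum, hcard, hav, hkval, hcv]
      ring
    · -- left agents
      intro m hm
      have hmt : (m : ℕ) ≤ t := by omega
      have hxm : x t m ≤ (t : ℝ) + 1 := by
        rcases lt_or_eq_of_le hmt with h | h
        · exact le_of_lt (hb m h)
        · have := ha m (by omega) (by omega)
          rw [this, h]
      rw [hup t]
      show (∑ j ∈ Finset.univ.filter (fun j => |x t j - x t m| ≤ 1), x t j) /
        ((Finset.univ.filter (fun j => |x t j - x t m| ≤ 1)).card : ℝ) < _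
      have hmem : m ∈ Finset.univ.filter (fun j => |x t j - x t m| ≤ 1) := by
        simp
      apply avg_lt_of _ _ _ m hmem
      · intro j hj
        simp only [Finset.mem_filter, Finset.mem_univ, true_and] at hj
        rw [abs_le] at hj
        push_cast
        linarith [hj.2]
      · push_cast; linarith
    · -- right agents
      intro m hm
      have hmt : n ≤ (m : ℕ) + t + 1 := by omega
      have hxm : (n : ℝ) - t ≤ x t m := by
        by_cases h : n ≤ (m : ℕ) + t
        · exact le_of_lt (hc m h)
        · have hmn : (m : ℕ) + t + 1 = n := by omega
          have := ha m (by omega) (by omega)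
          rw [this]
          have : ((m : ℕ) : ℝ) + 1 = (n : ℝ) - t := by
            have := hmn
            push_cast [← this]
            ring
          linarith [this.le]
      rw [hup t]
      have hcast : ((t + 1 : ℕ) : ℝ) = (t : ℝ) + 1 := by push_cast; ring
      rw [hcast]
      show ((n : ℝ) - ((t : ℝ) + 1)) <
        (∑ j ∈ Finset.univ.filter (fun j => |x t j - x t m| ≤ 1), x t j) /
        ((Finset.univ.filter (fun j => |x t j - x t m| ≤ 1)).card : ℝ)
      have hmem : m ∈ Finset.univ.filter (fun j => |x t j - x t m| ≤ 1) := by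
        simp
      apply avg_gt_of _ _ _ m hmem
      · intro j hj
        simp only [Finset.mem_filter, Finset.mem_univ, true_and] at hj
        rw [abs_le] at hj
        push_cast
        linarith [hj.1]
      · linarith

/-- The equally spaced configuration `E_n = (1, 2, …, n)` (agent `i : Fin n`
has opinion `i + 1`).  For any agent `i` with (1-indexed) label `< n/2`, the
opinions of agents `i` and `(n+1) - i` are unchanged for all times `t < i`;
consequently the configuration is not frozen before time `⌊n/2⌋`, so the
freezing time of `E_n` is at least `⌊n/2⌋` and `f₁(n) = Ω(n)`. -/
theorem stmt_17 (n : ℕ) (x : ℕ → Fin n → ℝ)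
    (hx0 : ∀ i : Fin n, x 0 i = (i : ℕ) + 1)
    (hup : ∀ t, x (t + 1) = hkStep (x t)) :
    (∀ i j : Fin n, 2 * ((i : ℕ) + 1) < n → (j : ℕ) = n - 1 - (i : ℕ) →
      ∀ t, t < (i : ℕ) + 1 → x t i = x 0 i ∧ x t j = x 0 j) ∧
    (∀ t, t < n / 2 → ¬ ∀ a b : Fin n, x t a ≠ x t b → 1 < |x t a - x t b|) := by
  constructor
  · intro i j hi hj t ht
    have h2t : 2 * t < n := by omega
    obtain ⟨ha, _, _⟩ := hk_invariant n x hx0 hup t h2t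
    constructor
    · rw [ha i (by omega) (by omega), hx0 i]
    · have hj' : (j : ℕ) = n - 1 - (i : ℕ) := hj
      rw [ha j (by omega) (by omega), hx0 j]
  · intro t ht hfrozen
    have h2t2 : 2 * t + 2 ≤ n := by omega
    have h2t : 2 * t < n := by omega
    obtain ⟨ha, _, _⟩ := hk_invariant n x hx0 hup t h2t
    have hm1 : t < n := by omega
    have hm2 : t + 1 < n := by omega
    set a : Fin n := ⟨t, hm1⟩ with ha_def
    set b : Fin n := ⟨t + 1, hm2⟩ with hb_def
    have hxa : x t a = (t : ℝ) + 1 := by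
      have h := ha a (Nat.le_refl t) (by show t + t + 1 ≤ n; omega)
      rw [h]
    have hxb : x t b = (t : ℝ) + 2 := by
      have h := ha b (by show t ≤ t + 1; omega) (by show t + 1 + t + 1 ≤ n; omega)
      rw [h]
      show ((t + 1 : ℕ) : ℝ) + 1 = _
      push_cast; ring
    have hne : x t a ≠ x t b := by rw [hxa, hxb]; intro h; linarith
    have := hfrozen a b hne
    rw [hxa, hxb] at this
    have : (1 : ℝ) < 1 := by
      calc (1 : ℝ) < |(t : ℝ) + 1 - ((t : ℝ) + 2)| := this
        _ = 1 := by rw [show (t : ℝ) + 1 - ((t : ℝ) + 2) = -1 by ring]; simp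
    exact absurd this (lt_irrefl 1)
end

section
/- Let n ≥ 3 and suppose at time t the configuration derived from D_n has the same receptivity graph as at time 0. Define the gap vector y_t ∈ ℝ^{n+2} by y_{i,t} = x_t(n+1+i) - x_t(n+i) for 0 ≤ i ≤ n+1. Then y_{t+1} = M·y_t, where M is the (n+2)×(n+2) matrix whose upper-left 2×3 block is [[n/((n+1)(n+2)), 1/(n+2), 0], [n/(n+2), (2n+1)/(3(n+2)), 1/3]], which satisfies the central symmetry m_{i,j} = m_{(n+3)-i,(n+3)-j}, and whose rows 3 ≤ i ≤ n have m_{i,j} = 1/3 if |i-j| ≤ 1 and 0 otherwise. -/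
open scoped Classical

noncomputable def gfun {N : ℕ} (z : Fin N → ℝ) : ℕ → ℝ :=
  fun k => if h : k < N then z ⟨k, h⟩ else 0

lemma gfun_eq {N : ℕ} (z : Fin N → ℝ) (k : ℕ) (h : k < N) : gfun z k = z ⟨k, h⟩ := dif_pos h

lemma aux_sum_transfer {N : ℕ} (p : ℕ → Prop) [DecidablePred p] (f : ℕ → ℝ) :
    ∑ j ∈ Finset.univ.filter (fun j : Fin N => p j.val), f j.val
      = ∑ k ∈ (Finset.range N).filter p, f k := by
  rw [Finset.sum_filter, Finset.sum_filter,
    ← Fin.sum_univ_eq_sum_range (fun k => if p k then f k else 0) N]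

lemma aux_card_transfer {N : ℕ} (p : ℕ → Prop) [DecidablePred p] :
    (Finset.univ.filter (fun j : Fin N => p j.val)).card
      = ((Finset.range N).filter p).card := by
  rw [Finset.card_filter, Finset.card_filter,
    ← Fin.sum_univ_eq_sum_range (fun k => if p k then 1 else 0) N]

lemma aux_step {N : ℕ} (x : ℕ → Fin N → ℝ) (t : ℕ) (hup : x (t+1) = hkStep (x t))
    (hG : ∀ i j : Fin N, |x t i - x t j| ≤ 1 ↔ |x 0 i - x 0 j| ≤ 1)
    (a : Fin N) (p : ℕ → Prop) [DecidablePred p]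
    (hp : ∀ j : Fin N, (|x 0 j - x 0 a| ≤ 1 ↔ p (j:ℕ))) :
    x (t+1) a = (∑ k ∈ (Finset.range N).filter p, gfun (x t) k) /
      (((Finset.range N).filter p).card : ℝ) := by
  rw [hup]
  unfold hkStep
  have hf : (Finset.univ.filter (fun j : Fin N => |x t j - x t a| ≤ 1))
      = Finset.univ.filter (fun j : Fin N => p j.val) :=
    Finset.filter_congr (fun j _ => by rw [hG j a]; exact hp j)
  rw [hf]
  have hs : ∑ j ∈ Finset.univ.filter (fun j : Fin N => p j.val), x t j
      = ∑ k ∈ (Finset.range N).filter p, gfun (x t) k := by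
    rw [← aux_sum_transfer p (gfun (x t))]
    exact Finset.sum_congr rfl (fun j _ => (gfun_eq (x t) j.1 j.2).symm)
  rw [hs, aux_card_transfer p]

set_option maxHeartbeats 1000000 in
/-- Let `x` be the HK trajectory started from the dumbbell configuration `D_n`
(`3n+1` agents, `n ≥ 3`; agent `i : Fin (3n+1)` has 1-indexed label `i+1`), and
suppose at time `t` the receptivity graph is the same as at time `0`.  The gap
vector `y_{i,s} = x_s(n+1+i) - x_s(n+i)`, `0 ≤ i ≤ n+1` (1-indexed agents),
then satisfies `y_{t+1} = M·y_t`, where `M` is the `(n+2)×(n+2)` matrix (rows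
and columns indexed by `Fin (n+2)`, paper index `i` ↔ `i-1`) whose upper-left
`2×3` block is `[[n/((n+1)(n+2)), 1/(n+2), 0], [n/(n+2), (2n+1)/(3(n+2)), 1/3]]`
(all remaining entries of the first two rows being `0`), which is centrally
symmetric, `m_{i,j} = m_{(n+3)-i,(n+3)-j}`, and whose rows `3 ≤ i ≤ n` (paper
indexing) are the tridiagonal rows with entries `1/3` for `|i-j| ≤ 1`. -/
theorem stmt_19 (n : ℕ) (hn : 3 ≤ n)
    (x : ℕ → Fin (3 * n + 1) → ℝ)
    (hx0 : ∀ i : Fin (3 * n + 1), x 0 i =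
      if (i : ℕ) + 1 ≤ n then -(1 / (n : ℝ))
      else if (i : ℕ) + 1 ≤ 2 * n + 1 then ((i : ℕ) + 1 : ℝ) - ((n : ℝ) + 1)
      else (n : ℝ) + 1 / (n : ℝ))
    (hup : ∀ s, x (s + 1) = hkStep (x s))
    (t : ℕ)
    (hG : ∀ i j : Fin (3 * n + 1), |x t i - x t j| ≤ 1 ↔ |x 0 i - x 0 j| ≤ 1)
    (y : ℕ → Fin (n + 2) → ℝ)
    (hy : ∀ (s : ℕ) (i : Fin (n + 2)),
      y s i = x s ⟨n + (i : ℕ), by have := i.isLt; omega⟩ -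
              x s ⟨n + (i : ℕ) - 1, by have := i.isLt; omega⟩)
    (M : Matrix (Fin (n + 2)) (Fin (n + 2)) ℝ)
    (hM00 : M ⟨0, by omega⟩ ⟨0, by omega⟩ = (n : ℝ) / (((n : ℝ) + 1) * ((n : ℝ) + 2)))
    (hM01 : M ⟨0, by omega⟩ ⟨1, by omega⟩ = 1 / ((n : ℝ) + 2))
    (hM0 : ∀ j : Fin (n + 2), 2 ≤ (j : ℕ) → M ⟨0, by omega⟩ j = 0)
    (hM10 : M ⟨1, by omega⟩ ⟨0, by omega⟩ = (n : ℝ) / ((n : ℝ) + 2))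
    (hM11 : M ⟨1, by omega⟩ ⟨1, by omega⟩ = (2 * (n : ℝ) + 1) / (3 * ((n : ℝ) + 2)))
    (hM12 : M ⟨1, by omega⟩ ⟨2, by omega⟩ = 1 / 3)
    (hM1 : ∀ j : Fin (n + 2), 3 ≤ (j : ℕ) → M ⟨1, by omega⟩ j = 0)
    (hMmid : ∀ i j : Fin (n + 2), 2 ≤ (i : ℕ) → (i : ℕ) ≤ n - 1 →
      M i j = if (i : ℕ) ≤ (j : ℕ) + 1 ∧ (j : ℕ) ≤ (i : ℕ) + 1 then (1/3 : ℝ) else 0)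
    (hMsymm : ∀ i j : Fin (n + 2),
      M i j = M ⟨n + 1 - (i : ℕ), by omega⟩ ⟨n + 1 - (j : ℕ), by omega⟩) :
    ∀ i : Fin (n + 2), y (t + 1) i = ∑ j : Fin (n + 2), M i j * y t j := by
  have hnR : (3:ℝ) ≤ (n:ℝ) := by exact_mod_cast hn
  have hn0 : (0:ℝ) < n := by linarith
  have hinv : 1/(n:ℝ) ≤ 1 := by rw [div_le_one hn0]; linarith
  have hinvpos : 0 < 1/(n:ℝ) := by positivity
  have hd1 : (n:ℝ) + 1 ≠ 0 := by linarith
  have hd2 : (n:ℝ) + 2 ≠ 0 := by linarith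
  -- equal values propagate
  have heq : ∀ s (i j : Fin (3*n+1)), x 0 i = x 0 j → x s i = x s j := by
    intro s
    induction s with
    | zero => exact fun i j h => h
    | succ s ih =>
      intro i j h
      have h' := ih i j h
      rw [hup s]
      unfold hkStep
      rw [h']
  -- explicit values at time 0
  have hval : ∀ i : Fin (3*n+1), x 0 i =
      if (i:ℕ) < n then -(1/(n:ℝ)) else if (i:ℕ) ≤ 2*n then ((i:ℕ):ℝ) - n
      else (n:ℝ) + 1/n := by
    intro i
    rw [hx0 i]
    rcases Nat.lt_or_ge (i:ℕ) n with h | h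
    · rw [if_pos (by omega), if_pos h]
    · rcases le_or_gt ((i:ℕ)+1) (2*n+1) with h2 | h2
      · rw [if_neg (by omega), if_pos h2, if_neg (by omega), if_pos (by omega)]
        ring
      · rw [if_neg (by omega), if_neg (by omega), if_neg (by omega), if_neg (by omega)]
  -- neighbourhood characterisations at time 0
  have hch1 : ∀ j : Fin (3*n+1),
      (|x 0 j - x 0 ⟨n-1, by omega⟩| ≤ 1 ↔ (j:ℕ) ≤ n) := by
    intro j
    rw [hval j, hval ⟨n-1, by omega⟩]
    simp only [Fin.val_mk]
    rw [if_pos (by omega : n-1 < n)]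
    rcases Nat.lt_or_ge (j:ℕ) n with hj | hj
    · rw [if_pos hj]
      exact iff_of_true (by rw [abs_le]; constructor <;> linarith) (by omega)
    · rcases le_or_gt (j:ℕ) (2*n) with hj2 | hj2
      · rw [if_neg (by omega), if_pos hj2]
        have hjr : (n:ℝ) ≤ (j:ℕ) := by exact_mod_cast hj
        rw [abs_le]
        constructor
        · rintro ⟨h1, h2⟩
          by_contra hc
          have : ((n:ℝ)) + 1 ≤ ((j:ℕ):ℝ) := by
            exact_mod_cast (show ((n+1:ℕ):ℝ) ≤ ((j:ℕ):ℝ) from by exact_mod_cast (by omega : n+1 ≤ (j:ℕ)))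
          linarith
        · intro h
          have hje : (j:ℕ) = n := by omega
          have : ((j:ℕ):ℝ) = n := by exact_mod_cast hje
          constructor <;> linarith
      · rw [if_neg (by omega), if_neg (by omega)]
        refine iff_of_false (fun h => ?_) (by omega)
        rw [abs_le] at h
        linarith [h.2]
  have hch2 : ∀ j : Fin (3*n+1),
      (|x 0 j - x 0 ⟨n, by omega⟩| ≤ 1 ↔ (j:ℕ) ≤ n+1) := by
    intro j
    rw [hval j, hval ⟨n, by omega⟩]
    simp only [Fin.val_mk]
    rw [if_neg (lt_irrefl n), if_pos (by omega : n ≤ 2*n)]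
    rcases Nat.lt_or_ge (j:ℕ) n with hj | hj
    · rw [if_pos hj]
      exact iff_of_true (by rw [abs_le]; constructor <;> linarith) (by omega)
    · rcases le_or_gt (j:ℕ) (2*n) with hj2 | hj2
      · rw [if_neg (by omega), if_pos hj2]
        have hjr : (n:ℝ) ≤ (j:ℕ) := by exact_mod_cast hj
        rw [abs_le]
        constructor
        · rintro ⟨h1, h2⟩
          have : ((j:ℕ):ℝ) ≤ (n:ℝ) + 1 := by linarith
          exact_mod_cast this
        · intro h
          have : ((j:ℕ):ℝ) ≤ (n:ℝ) + 1 := by exact_mod_cast h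
          constructor <;> linarith
      · rw [if_neg (by omega), if_neg (by omega)]
        refine iff_of_false (fun h => ?_) (by omega)
        rw [abs_le] at h
        linarith [h.2]
  have hch3 : ∀ (k : ℕ) (_ : 1 ≤ k) (_ : k ≤ n-1) (j : Fin (3*n+1)),
      (|x 0 j - x 0 ⟨n+k, by omega⟩| ≤ 1 ↔ (n+k-1 ≤ (j:ℕ) ∧ (j:ℕ) ≤ n+k+1)) := by
    intro k hk1 hk2 j
    have hkr1 : (1:ℝ) ≤ (k:ℝ) := by exact_mod_cast hk1
    have hkr2 : (k:ℝ) + 1 ≤ (n:ℝ) := by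
      have h' : k+1 ≤ n := by omega
      have h'' := (Nat.cast_le (α := ℝ)).mpr h'
      push_cast at h''
      linarith
    rw [hval j, hval ⟨n+k, by omega⟩]
    simp only [Fin.val_mk]
    rw [if_neg (show ¬(n+k < n) from by omega), if_pos (show n+k ≤ 2*n from by omega)]
    have hcast : ((n+k:ℕ):ℝ) = (n:ℝ) + k := by push_cast; ring
    rw [hcast]
    rcases Nat.lt_or_ge (j:ℕ) n with hj | hj
    · rw [if_pos hj]
      refine iff_of_false (fun h => ?_) (by omega)
      rw [abs_le] at h
      linarith [h.1]
    · rcases le_or_gt (j:ℕ) (2*n) with hj2 | hj2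
      · rw [if_neg (show ¬((j:ℕ) < n) from by omega), if_pos hj2]
        rw [abs_le]
        constructor
        · rintro ⟨h1, h2⟩
          constructor
          · have hc1 : ((n+k:ℕ):ℝ) ≤ (((j:ℕ)+1:ℕ):ℝ) := by push_cast; linarith
            have := (Nat.cast_le (α := ℝ)).mp hc1
            omega
          · have hc2 : ((j:ℕ):ℝ) ≤ ((n+k+1:ℕ):ℝ) := by push_cast; linarith
            exact_mod_cast hc2
        · rintro ⟨ha, hb⟩
          have ha' := (Nat.cast_le (α := ℝ)).mpr (show n+k ≤ (j:ℕ)+1 from by omega)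
          have hb' := (Nat.cast_le (α := ℝ)).mpr hb
          push_cast at ha' hb'
          constructor <;> linarith
      · rw [if_neg (show ¬((j:ℕ) < n) from by omega), if_neg (show ¬((j:ℕ) ≤ 2*n) from by omega)]
        refine iff_of_false (fun h => ?_) (by omega)
        rw [abs_le] at h
        linarith [h.2]
  have hch4 : ∀ j : Fin (3*n+1),
      (|x 0 j - x 0 ⟨2*n, by omega⟩| ≤ 1 ↔ 2*n-1 ≤ (j:ℕ)) := by
    intro j
    rw [hval j, hval ⟨2*n, by omega⟩]
    simp only [Fin.val_mk]
    rw [if_neg (show ¬(2*n < n) from by omega), if_pos (le_refl (2*n))]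
    have hcast : ((2*n:ℕ):ℝ) = 2*(n:ℝ) := by push_cast; ring
    rw [hcast]
    rcases Nat.lt_or_ge (j:ℕ) n with hj | hj
    · rw [if_pos hj]
      refine iff_of_false (fun h => ?_) (by omega)
      rw [abs_le] at h
      linarith [h.1]
    · rcases le_or_gt (j:ℕ) (2*n) with hj2 | hj2
      · rw [if_neg (show ¬((j:ℕ) < n) from by omega), if_pos hj2]
        rw [abs_le]
        constructor
        · rintro ⟨h1, h2⟩
          have hc1 : ((2*n:ℕ):ℝ) ≤ (((j:ℕ)+1:ℕ):ℝ) := by push_cast; linarith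
          have := (Nat.cast_le (α := ℝ)).mp hc1
          omega
        · intro ha
          have ha' := (Nat.cast_le (α := ℝ)).mpr (show 2*n ≤ (j:ℕ)+1 from by omega)
          have hb' := (Nat.cast_le (α := ℝ)).mpr hj2
          push_cast at ha' hb'
          constructor <;> linarith
      · rw [if_neg (show ¬((j:ℕ) < n) from by omega), if_neg (show ¬((j:ℕ) ≤ 2*n) from by omega)]
        exact iff_of_true (by rw [abs_le]; constructor <;> linarith) (by omega)
  have hch5 : ∀ j : Fin (3*n+1),
      (|x 0 j - x 0 ⟨2*n+1, by omega⟩| ≤ 1 ↔ 2*n ≤ (j:ℕ)) := by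
    intro j
    rw [hval j, hval ⟨2*n+1, by omega⟩]
    simp only [Fin.val_mk]
    rw [if_neg (show ¬(2*n+1 < n) from by omega), if_neg (show ¬(2*n+1 ≤ 2*n) from by omega)]
    rcases Nat.lt_or_ge (j:ℕ) n with hj | hj
    · rw [if_pos hj]
      refine iff_of_false (fun h => ?_) (by omega)
      rw [abs_le] at h
      linarith [h.1]
    · rcases le_or_gt (j:ℕ) (2*n) with hj2 | hj2
      · rw [if_neg (show ¬((j:ℕ) < n) from by omega), if_pos hj2]
        have hb' := (Nat.cast_le (α := ℝ)).mpr hj2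
        push_cast at hb'
        rw [abs_le]
        constructor
        · rintro ⟨h1, h2⟩
          have hc1 : ((2*n:ℕ):ℝ) < (((j:ℕ)+1:ℕ):ℝ) := by push_cast; linarith
          have := (Nat.cast_lt (α := ℝ)).mp hc1
          omega
        · intro ha
          have hje : (j:ℕ) = 2*n := by omega
          have hje' : ((j:ℕ):ℝ) = ((2*n:ℕ):ℝ) := by exact_mod_cast hje
          push_cast at hje'
          constructor <;> linarith
      · rw [if_neg (show ¬((j:ℕ) < n) from by omega), if_neg (show ¬((j:ℕ) ≤ 2*n) from by omega)]
        exact iff_of_true (by rw [abs_le]; constructor <;> linarith) (by omega)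
  -- cluster agents keep equal values
  have hgleft : ∀ k, k < n → gfun (x t) k = gfun (x t) (n-1) := by
    intro k hk
    rw [gfun_eq (x t) k (by omega), gfun_eq (x t) (n-1) (by omega)]
    refine heq t _ _ ?_
    rw [hx0, hx0]
    simp only [Fin.val_mk]
    rw [if_pos (by omega), if_pos (by omega)]
  have hgright : ∀ k, 2*n+1 ≤ k → k < 3*n+1 → gfun (x t) k = gfun (x t) (2*n+1) := by
    intro k hk1 hk2
    rw [gfun_eq (x t) k (by omega), gfun_eq (x t) (2*n+1) (by omega)]
    refine heq t _ _ ?_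
    rw [hx0, hx0]
    simp only [Fin.val_mk]
    rw [if_neg (by omega), if_neg (by omega), if_neg (by omega), if_neg (by omega)]
  -- sums over the clusters
  have hsumL : ∑ k ∈ Finset.range n, gfun (x t) k = (n:ℝ) * gfun (x t) (n-1) := by
    rw [Finset.sum_congr rfl (fun k hk => hgleft k (Finset.mem_range.mp hk)),
      Finset.sum_const, Finset.card_range, nsmul_eq_mul]
  have hsumR : ∑ k ∈ Finset.Ico (2*n+1) (3*n+1), gfun (x t) k
      = (n:ℝ) * gfun (x t) (2*n+1) := by
    rw [Finset.sum_congr rfl (fun k hk => by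
      have := Finset.mem_Ico.mp hk
      exact hgright k this.1 this.2),
      Finset.sum_const, Nat.card_Ico, nsmul_eq_mul]
    rw [show 3*n+1 - (2*n+1) = n from by omega]
  have hX1 : gfun (x (t+1)) (n-1)
      = ((n:ℝ) * gfun (x t) (n-1) + gfun (x t) n) / ((n:ℝ)+1) := by
    rw [gfun_eq (x (t+1)) (n-1) (by omega),
      aux_step x t (hup t) hG ⟨n-1, by omega⟩ (fun k => k ≤ n) (fun j => hch1 j)]
    rw [show (Finset.range (3*n+1)).filter (fun k => k ≤ n) = Finset.range (n+1) from by
      ext k; simp only [Finset.mem_filter, Finset.mem_range]; omega]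
    rw [Finset.sum_range_succ, hsumL, Finset.card_range]
    push_cast
    ring
  have hX2 : gfun (x (t+1)) n
      = ((n:ℝ) * gfun (x t) (n-1) + gfun (x t) n + gfun (x t) (n+1)) / ((n:ℝ)+2) := by
    rw [gfun_eq (x (t+1)) n (by omega),
      aux_step x t (hup t) hG ⟨n, by omega⟩ (fun k => k ≤ n+1) (fun j => hch2 j)]
    rw [show (Finset.range (3*n+1)).filter (fun k => k ≤ n+1) = Finset.range (n+2) from by
      ext k; simp only [Finset.mem_filter, Finset.mem_range]; omega]
    rw [Finset.sum_range_succ, Finset.sum_range_succ, hsumL, Finset.card_range]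
    push_cast
    ring
  have hX3 : ∀ (k : ℕ) (_ : 1 ≤ k) (_ : k ≤ n-1), gfun (x (t+1)) (n+k)
      = (gfun (x t) (n+k-1) + gfun (x t) (n+k) + gfun (x t) (n+k+1)) / 3 := by
    intro k hk1 hk2
    rw [gfun_eq (x (t+1)) (n+k) (by omega),
      aux_step x t (hup t) hG ⟨n+k, by omega⟩ (fun m => n+k-1 ≤ m ∧ m ≤ n+k+1) (fun j => hch3 k hk1 hk2 j)]
    rw [show (Finset.range (3*n+1)).filter (fun m => n+k-1 ≤ m ∧ m ≤ n+k+1)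
        = {n+k-1, n+k, n+k+1} from by
      ext m
      simp only [Finset.mem_filter, Finset.mem_range, Finset.mem_insert, Finset.mem_singleton]
      omega]
    rw [Finset.sum_insert (by
        simp only [Finset.mem_insert, Finset.mem_singleton]; omega),
      Finset.sum_insert (by simp only [Finset.mem_singleton]; omega),
      Finset.sum_singleton,
      Finset.card_insert_of_notMem (by
        simp only [Finset.mem_insert, Finset.mem_singleton]; omega),
      Finset.card_insert_of_notMem (by simp only [Finset.mem_singleton]; omega),
      Finset.card_singleton]
    push_cast
    ring
  have hX4 : gfun (x (t+1)) (2*n)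
      = (gfun (x t) (2*n-1) + gfun (x t) (2*n) + (n:ℝ) * gfun (x t) (2*n+1)) / ((n:ℝ)+2) := by
    rw [gfun_eq (x (t+1)) (2*n) (by omega),
      aux_step x t (hup t) hG ⟨2*n, by omega⟩ (fun m => 2*n-1 ≤ m) (fun j => hch4 j)]
    rw [show (Finset.range (3*n+1)).filter (fun m => 2*n-1 ≤ m)
        = Finset.Ico (2*n-1) (3*n+1) from by
      ext m
      simp only [Finset.mem_filter, Finset.mem_range, Finset.mem_Ico]
      omega]
    rw [Finset.sum_eq_sum_Ico_succ_bot (by omega) (gfun (x t)),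
      show 2*n-1+1 = 2*n from by omega,
      Finset.sum_eq_sum_Ico_succ_bot (by omega) (gfun (x t)),
      hsumR, Nat.card_Ico, show 3*n+1 - (2*n-1) = n+2 from by omega]
    push_cast
    ring
  have hX5 : gfun (x (t+1)) (2*n+1)
      = (gfun (x t) (2*n) + (n:ℝ) * gfun (x t) (2*n+1)) / ((n:ℝ)+1) := by
    rw [gfun_eq (x (t+1)) (2*n+1) (by omega),
      aux_step x t (hup t) hG ⟨2*n+1, by omega⟩ (fun m => 2*n ≤ m) (fun j => hch5 j)]
    rw [show (Finset.range (3*n+1)).filter (fun m => 2*n ≤ m)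
        = Finset.Ico (2*n) (3*n+1) from by
      ext m
      simp only [Finset.mem_filter, Finset.mem_range, Finset.mem_Ico]
      omega]
    rw [Finset.sum_eq_sum_Ico_succ_bot (by omega) (gfun (x t)),
      hsumR, Nat.card_Ico, show 3*n+1 - 2*n = n+1 from by omega]
    push_cast
    ring
  -- y in terms of gfun
  have hyt : ∀ j : Fin (n+2), y t j = gfun (x t) (n + (j:ℕ)) - gfun (x t) (n + (j:ℕ) - 1) := by
    intro j
    have := j.isLt
    rw [hy t j, gfun_eq (x t) (n + (j:ℕ)) (by omega), gfun_eq (x t) (n + (j:ℕ) - 1) (by omega)]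
  have hyG : ∀ j : Fin (n+2),
      y (t+1) j = gfun (x (t+1)) (n + (j:ℕ)) - gfun (x (t+1)) (n + (j:ℕ) - 1) := by
    intro j
    have := j.isLt
    rw [hy (t+1) j, gfun_eq (x (t+1)) (n + (j:ℕ)) (by omega),
      gfun_eq (x (t+1)) (n + (j:ℕ) - 1) (by omega)]
  -- matrix extensionality helper
  have hMe : ∀ {a b c d : ℕ} {ha : a < n+2} {hb : b < n+2} {hc : c < n+2} {hd : d < n+2},
      a = c → b = d → M ⟨a, ha⟩ ⟨b, hb⟩ = M ⟨c, hc⟩ ⟨d, hd⟩ := by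
    intro a b c d ha hb hc hd h1 h2
    subst h1; subst h2; rfl
  intro i
  obtain ⟨iv, hiv⟩ := i
  have hcases : iv = 0 ∨ iv = 1 ∨ (2 ≤ iv ∧ iv ≤ n-1) ∨ iv = n ∨ iv = n+1 := by omega
  rcases hcases with rfl | rfl | ⟨hc2, hc3⟩ | hvn | hvn
  · -- row 0
    have hout : ∀ j ∈ Finset.univ, j ∉ ({⟨0, by omega⟩, ⟨1, by omega⟩} : Finset (Fin (n+2))) →
        M ⟨0, hiv⟩ j * y t j = 0 := by
      intro j _ hj
      simp only [Finset.mem_insert, Finset.mem_singleton] at hj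
      push_neg at hj
      have v0 : (j:ℕ) ≠ 0 := fun h => hj.1 (Fin.ext h)
      have v1 : (j:ℕ) ≠ 1 := fun h => hj.2 (Fin.ext h)
      rw [hM0 j (by omega), zero_mul]
    rw [← Finset.sum_subset (Finset.subset_univ _) hout,
      Finset.sum_insert (by simp only [Finset.mem_singleton, Fin.mk.injEq]; omega),
      Finset.sum_singleton, hM00, hM01, hyt ⟨0, by omega⟩, hyt ⟨1, by omega⟩,
      hyG ⟨0, hiv⟩]
    simp only [Fin.val_mk, Nat.add_zero, Nat.add_sub_cancel]
    rw [hX1, hX2]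
    field_simp
    ring
  · -- row 1
    have hout : ∀ j ∈ Finset.univ,
        j ∉ ({⟨0, by omega⟩, ⟨1, by omega⟩, ⟨2, by omega⟩} : Finset (Fin (n+2))) →
        M ⟨1, hiv⟩ j * y t j = 0 := by
      intro j _ hj
      simp only [Finset.mem_insert, Finset.mem_singleton] at hj
      push_neg at hj
      have v0 : (j:ℕ) ≠ 0 := fun h => hj.1 (Fin.ext h)
      have v1 : (j:ℕ) ≠ 1 := fun h => hj.2.1 (Fin.ext h)
      have v2 : (j:ℕ) ≠ 2 := fun h => hj.2.2 (Fin.ext h)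
      rw [hM1 j (by omega), zero_mul]
    rw [← Finset.sum_subset (Finset.subset_univ _) hout,
      Finset.sum_insert (by
        simp only [Finset.mem_insert, Finset.mem_singleton, Fin.mk.injEq]; omega),
      Finset.sum_insert (by simp only [Finset.mem_singleton, Fin.mk.injEq]; omega),
      Finset.sum_singleton, hM10, hM11, hM12,
      hyt ⟨0, by omega⟩, hyt ⟨1, by omega⟩, hyt ⟨2, by omega⟩, hyG ⟨1, hiv⟩]
    simp only [Fin.val_mk, Nat.add_zero, Nat.add_sub_cancel]
    rw [show n+2-1 = n+1 from by omega, hX2,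
      hX3 1 (by omega) (by omega),
      show n+1-1 = n from by omega, show n+1+1 = n+2 from by omega]
    field_simp
    ring
  · -- middle rows
    obtain ⟨m, rfl⟩ : ∃ m, iv = m+2 := ⟨iv-2, by omega⟩
    have hout : ∀ j ∈ Finset.univ,
        j ∉ ({⟨m+1, by omega⟩, ⟨m+2, hiv⟩, ⟨m+3, by omega⟩} : Finset (Fin (n+2))) →
        M ⟨m+2, hiv⟩ j * y t j = 0 := by
      intro j _ hj
      simp only [Finset.mem_insert, Finset.mem_singleton] at hj
      push_neg at hj
      have v0 : (j:ℕ) ≠ m+1 := fun h => hj.1 (Fin.ext h)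
      have v1 : (j:ℕ) ≠ m+2 := fun h => hj.2.1 (Fin.ext h)
      have v2 : (j:ℕ) ≠ m+3 := fun h => hj.2.2 (Fin.ext h)
      rw [hMmid ⟨m+2, hiv⟩ j (by simp only [Fin.val_mk]; omega)
        (by simp only [Fin.val_mk]; omega),
        if_neg (by simp only [Fin.val_mk]; omega), zero_mul]
    have m1 : M ⟨m+2, hiv⟩ ⟨m+1, by omega⟩ = 1/3 := by
      rw [hMmid _ _ (by simp only [Fin.val_mk]; omega) (by simp only [Fin.val_mk]; omega),
        if_pos (by simp only [Fin.val_mk]; omega)]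
    have m2 : M ⟨m+2, hiv⟩ ⟨m+2, hiv⟩ = 1/3 := by
      rw [hMmid _ _ (by simp only [Fin.val_mk]; omega) (by simp only [Fin.val_mk]; omega),
        if_pos (by simp only [Fin.val_mk]; omega)]
    have m3 : M ⟨m+2, hiv⟩ ⟨m+3, by omega⟩ = 1/3 := by
      rw [hMmid _ _ (by simp only [Fin.val_mk]; omega) (by simp only [Fin.val_mk]; omega),
        if_pos (by simp only [Fin.val_mk]; omega)]
    rw [← Finset.sum_subset (Finset.subset_univ _) hout,
      Finset.sum_insert (by
        simp only [Finset.mem_insert, Finset.mem_singleton, Fin.mk.injEq]; omega),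
      Finset.sum_insert (by simp only [Finset.mem_singleton, Fin.mk.injEq]; omega),
      Finset.sum_singleton, m1, m2, m3,
      hyt ⟨m+1, by omega⟩, hyt ⟨m+2, hiv⟩, hyt ⟨m+3, by omega⟩, hyG ⟨m+2, hiv⟩]
    simp only [Fin.val_mk]
    rw [show n+(m+2)-1 = n+(m+1) from by omega,
      hX3 (m+2) (by omega) (by omega), hX3 (m+1) (by omega) (by omega)]
    rw [show n+(m+1)-1 = n+m from by omega,
      show n+(m+2)-1 = n+(m+1) from by omega,
      show n+(m+3)-1 = n+(m+2) from by omega,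
      show n+(m+1)+1 = n+(m+2) from by omega,
      show n+(m+2)+1 = n+(m+3) from by omega]
    ring
  · -- row n
    replace hvn := hvn.symm
    subst hvn
    have hout : ∀ j ∈ Finset.univ,
        j ∉ ({⟨n-1, by omega⟩, ⟨n, hiv⟩, ⟨n+1, by omega⟩} : Finset (Fin (n+2))) →
        M ⟨n, hiv⟩ j * y t j = 0 := by
      intro j _ hj
      simp only [Finset.mem_insert, Finset.mem_singleton] at hj
      push_neg at hj
      have v0 : (j:ℕ) ≠ n-1 := fun h => hj.1 (Fin.ext h)
      have v1 : (j:ℕ) ≠ n := fun h => hj.2.1 (Fin.ext h)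
      have v2 : (j:ℕ) ≠ n+1 := fun h => hj.2.2 (Fin.ext h)
      have hjlt := j.isLt
      rw [hMsymm ⟨n, hiv⟩ j]
      rw [(hMe (show n+1-((⟨n, hiv⟩ : Fin (n+2)):ℕ) = 1 from by
          simp only [Fin.val_mk]; omega) rfl :
        M _ _ = M ⟨1, by omega⟩ ⟨n+1-(j:ℕ), by omega⟩)]
      rw [hM1 ⟨n+1-(j:ℕ), by omega⟩ (by simp only [Fin.val_mk]; omega), zero_mul]
    have m1 : M ⟨n, hiv⟩ ⟨n-1, by omega⟩ = 1/3 := by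
      rw [hMsymm ⟨n, hiv⟩ ⟨n-1, by omega⟩]
      exact (hMe (by simp only [Fin.val_mk]; omega) (by simp only [Fin.val_mk]; omega)).trans hM12
    have m2 : M ⟨n, hiv⟩ ⟨n, hiv⟩ = (2*(n:ℝ)+1) / (3*((n:ℝ)+2)) := by
      rw [hMsymm ⟨n, hiv⟩ ⟨n, hiv⟩]
      exact (hMe (by simp only [Fin.val_mk]; omega) (by simp only [Fin.val_mk]; omega)).trans hM11
    have m3 : M ⟨n, hiv⟩ ⟨n+1, by omega⟩ = (n:ℝ) / ((n:ℝ)+2) := by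
      rw [hMsymm ⟨n, hiv⟩ ⟨n+1, by omega⟩]
      exact (hMe (by simp only [Fin.val_mk]; omega) (by simp only [Fin.val_mk]; omega)).trans hM10
    rw [← Finset.sum_subset (Finset.subset_univ _) hout,
      Finset.sum_insert (by
        simp only [Finset.mem_insert, Finset.mem_singleton, Fin.mk.injEq]; omega),
      Finset.sum_insert (by simp only [Finset.mem_singleton, Fin.mk.injEq]; omega),
      Finset.sum_singleton, m1, m2, m3,
      hyt ⟨n-1, by omega⟩, hyt ⟨n, hiv⟩, hyt ⟨n+1, by omega⟩, hyG ⟨n, hiv⟩]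
    simp only [Fin.val_mk]
    rw [show n+(n-1)-1 = 2*n-2 from by omega, show n+(n-1) = 2*n-1 from by omega,
      show n+n-1 = 2*n-1 from by omega, show n+n = 2*n from by omega,
      show n+(n+1)-1 = 2*n from by omega, show n+(n+1) = 2*n+1 from by omega]
    have e := hX3 (n-1) (by omega) (by omega)
    rw [show n+(n-1) = 2*n-1 from by omega] at e
    rw [show 2*n-1-1 = 2*n-2 from by omega, show 2*n-1+1 = 2*n from by omega] at e
    rw [hX4, e]
    field_simp
    ring
  · -- row n+1
    replace hvn := hvn.symm
    subst hvn
    have hout : ∀ j ∈ Finset.univ,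
        j ∉ ({⟨n, by omega⟩, ⟨n+1, hiv⟩} : Finset (Fin (n+2))) →
        M ⟨n+1, hiv⟩ j * y t j = 0 := by
      intro j _ hj
      simp only [Finset.mem_insert, Finset.mem_singleton] at hj
      push_neg at hj
      have v0 : (j:ℕ) ≠ n := fun h => hj.1 (Fin.ext h)
      have v1 : (j:ℕ) ≠ n+1 := fun h => hj.2 (Fin.ext h)
      have hjlt := j.isLt
      rw [hMsymm ⟨n+1, hiv⟩ j]
      rw [(hMe (show n+1-((⟨n+1, hiv⟩ : Fin (n+2)):ℕ) = 0 from by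
          simp only [Fin.val_mk]; omega) rfl :
        M _ _ = M ⟨0, by omega⟩ ⟨n+1-(j:ℕ), by omega⟩)]
      rw [hM0 ⟨n+1-(j:ℕ), by omega⟩ (by simp only [Fin.val_mk]; omega), zero_mul]
    have m1 : M ⟨n+1, hiv⟩ ⟨n, by omega⟩ = 1 / ((n:ℝ)+2) := by
      rw [hMsymm ⟨n+1, hiv⟩ ⟨n, by omega⟩]
      exact (hMe (by simp only [Fin.val_mk]; omega) (by simp only [Fin.val_mk]; omega)).trans hM01
    have m2 : M ⟨n+1, hiv⟩ ⟨n+1, hiv⟩ = (n:ℝ) / (((n:ℝ)+1) * ((n:ℝ)+2)) := by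
      rw [hMsymm ⟨n+1, hiv⟩ ⟨n+1, hiv⟩]
      exact (hMe (by simp only [Fin.val_mk]; omega) (by simp only [Fin.val_mk]; omega)).trans hM00
    rw [← Finset.sum_subset (Finset.subset_univ _) hout,
      Finset.sum_insert (by simp only [Finset.mem_singleton, Fin.mk.injEq]; omega),
      Finset.sum_singleton, m1, m2,
      hyt ⟨n, by omega⟩, hyt ⟨n+1, hiv⟩, hyG ⟨n+1, hiv⟩]
    simp only [Fin.val_mk]
    rw [show n+n-1 = 2*n-1 from by omega, show n+n = 2*n from by omega,
      show n+(n+1)-1 = 2*n from by omega, show n+(n+1) = 2*n+1 from by omega]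
    rw [hX4, hX5]
    field_simp
    ring
end
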